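/- arXiv:1711.01295 — 10 statements merged into one kernel-verified Lean document; each statement's English description precedes it below -/
import Mathlib

section
/- Let A be a monotone non-increasing allocation rule with A_t ∈ (0,1] for all t. Define P*_K(A) = c_K and, for t < K, P*_t(A) = c_t + Σ_{j=t+1}^K (A_j/A_t)(c_j − c_{j−1}). Then for every payment rule P ∈ ℝ^K such that the pair (A,P) is truthful and individually rational, one has P_t ≥ P*_t(A) for every t ∈ {1,…,K}. -/
/-- Any truthful, individually rational payment rule is pointwise
bounded below by the canonical payments `P*`. Costs are indexed by `{1, …, K}`. -/
theorem payments_lower_bounded_by_Pstar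
    (K : ℕ) (hK : 1 ≤ K) (c A P Pstar : ℕ → ℝ)
    (hc1 : 0 < c 1)
    (hcmono : ∀ j ∈ Finset.Icc 1 (K - 1), c j < c (j + 1))
    (hApos : ∀ t ∈ Finset.Icc 1 K, 0 < A t)
    (hAle1 : ∀ t ∈ Finset.Icc 1 K, A t ≤ 1)
    (hAmono : ∀ j ∈ Finset.Icc 1 (K - 1), A (j + 1) ≤ A j)
    (truthful : ∀ t ∈ Finset.Icc 1 K, ∀ s ∈ Finset.Icc 1 K,
      (P s - c t) * A s ≤ (P t - c t) * A t)
    (IR : ∀ t ∈ Finset.Icc 1 K, c t ≤ P t)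
    (hPstar : ∀ t ∈ Finset.Icc 1 K,
      Pstar t = c t + ∑ j ∈ Finset.Icc (t + 1) K, (A j / A t) * (c j - c (j - 1))) :
    ∀ t ∈ Finset.Icc 1 K, Pstar t ≤ P t := by
  -- key claim by downward induction
  have key : ∀ d t, 1 ≤ t → t + d = K →
      (∑ j ∈ Finset.Icc (t + 1) K, A j * (c j - c (j - 1))) ≤ (P t - c t) * A t := by
    intro d
    induction d with
    | zero =>
      intro t ht htK
      simp only [Nat.add_zero] at htK
      subst htK
      rw [Finset.Icc_eq_empty (by omega)]
      simp only [Finset.sum_empty]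
      have hmem : t ∈ Finset.Icc 1 t := by simp [Finset.mem_Icc]; omega
      have := IR t hmem
      have := hApos t hmem
      nlinarith
    | succ d ih =>
      intro t ht htK
      have ht1 : t + 1 + d = K := by omega
      have hIH := ih (t + 1) (by omega) ht1
      have hmemt : t ∈ Finset.Icc 1 K := by simp [Finset.mem_Icc]; omega
      have hmemt1 : t + 1 ∈ Finset.Icc 1 K := by simp [Finset.mem_Icc]; omega
      have htr := truthful t hmemt (t + 1) hmemt1
      have hsplit : Finset.Icc (t + 1) K = insert (t + 1) (Finset.Icc (t + 2) K) := by
        ext x; simp only [Finset.mem_Icc, Finset.mem_insert]; omega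
      rw [hsplit, Finset.sum_insert (by simp [Finset.mem_Icc])]
      have hsub : t + 1 - 1 = t := by omega
      rw [hsub]
      have hA1 := hApos (t + 1) hmemt1
      calc A (t + 1) * (c (t + 1) - c t) + ∑ j ∈ Finset.Icc (t + 2) K, A j * (c j - c (j - 1))
          ≤ A (t + 1) * (c (t + 1) - c t) + (P (t + 1) - c (t + 1)) * A (t + 1) := by
            have : Finset.Icc (t + 1 + 1) K = Finset.Icc (t + 2) K := by norm_num
            rw [← this]; linarith [hIH]
        _ = (P (t + 1) - c t) * A (t + 1) := by ring
        _ ≤ (P t - c t) * A t := htr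
  intro t ht
  rw [hPstar t ht]
  have hApt := hApos t ht
  have ht1 : 1 ≤ t ∧ t ≤ K := Finset.mem_Icc.mp ht
  have hkey := key (K - t) t ht1.1 (by omega)
  have hsum : (∑ j ∈ Finset.Icc (t + 1) K, (A j / A t) * (c j - c (j - 1)))
      = (∑ j ∈ Finset.Icc (t + 1) K, A j * (c j - c (j - 1))) / A t := by
    rw [Finset.sum_div]
    exact Finset.sum_congr rfl fun j _ => by rw [div_mul_eq_mul_div]
  rw [hsum]
  have : (∑ j ∈ Finset.Icc (t + 1) K, A j * (c j - c (j - 1))) / A t ≤ P t - c t :=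
    (div_le_iff₀ hApt).mpr hkey
  linarith
end

section
/- Let A be a monotone non-increasing allocation rule with A_t ∈ (0,1] for all t. Define P*_K(A) = c_K and, for t < K, P*_t(A) = c_t + Σ_{j=t+1}^K (A_j/A_t)(c_j − c_{j−1}). Then the mechanism (A, P*(A)) is truthful and individually rational. -/
/-!
Clearing the denominator `A_t`, the truthful utility `(P*_t - c_t) A_t` is the information rent
`U_t = ∑_{t < j ≤ K} A_j (c_j - c_{j-1})`, a Riemann sum of `A` over `[c_t, c_K]`. Reporting `s`
instead of `t` yields `U_s + (c_s - c_t) A_s`, which falls short of `U_t` by the sum of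
`|A_j - A_s| (c_j - c_{j-1})` over the `j` between `t` and `s` (telescoping `c`); monotonicity of `A`
is exactly what makes these terms come with the right sign. Individual rationality is `U_t ≥ 0`.
-/

open Finset

theorem monotoneOn_Icc_of_le_add_one {β : Type*} [Preorder β] {f : ℕ → β} {a b : ℕ}
    (hf : ∀ j ∈ Icc a (b - 1), f j ≤ f (j + 1)) : MonotoneOn f (Set.Icc a b) :=
  monotoneOn_of_le_succ Set.ordConnected_Icc fun j _ hj hj1 => by
    rw [Order.succ_eq_add_one] at hj1 ⊢
    exact hf j (mem_Icc.2 ⟨hj.1, Nat.le_sub_one_of_lt hj1.2⟩)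

theorem antitoneOn_Icc_of_add_one_le {β : Type*} [Preorder β] {f : ℕ → β} {a b : ℕ}
    (hf : ∀ j ∈ Icc a (b - 1), f (j + 1) ≤ f j) : AntitoneOn f (Set.Icc a b) :=
  monotoneOn_Icc_of_le_add_one (β := βᵒᵈ) hf

theorem sum_Ioc_sub_pred (c : ℕ → ℝ) {a b : ℕ} (hab : a ≤ b) :
    ∑ j ∈ Ioc a b, (c j - c (j - 1)) = c b - c a := by
  rw [← Ico_add_one_add_one_eq_Ioc, ← sum_Ico_add' (fun j => c j - c (j - 1))]
  simpa using sum_Ico_sub c hab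

section

variable {A c : ℕ → ℝ} {a b : ℕ}

theorem sub_pred_nonneg (hc : MonotoneOn c (Set.Icc a b)) {j : ℕ} (hj : j ∈ Ioc a b) :
    0 ≤ c j - c (j - 1) := by
  obtain ⟨haj, hjb⟩ := mem_Ioc.1 hj
  exact sub_nonneg.2 (hc ⟨by omega, by omega⟩ ⟨haj.le, hjb⟩ (Nat.sub_le j 1))

theorem mul_sub_le_sum_Ioc (hc : MonotoneOn c (Set.Icc a b)) (hA : AntitoneOn A (Set.Icc a b))
    (hab : a ≤ b) : A b * (c b - c a) ≤ ∑ j ∈ Ioc a b, A j * (c j - c (j - 1)) := by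
  rw [← sum_Ioc_sub_pred c hab, mul_sum]
  refine sum_le_sum fun j hj => mul_le_mul_of_nonneg_right ?_ (sub_pred_nonneg hc hj)
  obtain ⟨haj, hjb⟩ := mem_Ioc.1 hj
  exact hA ⟨haj.le, hjb⟩ ⟨hab, le_rfl⟩ hjb

theorem sum_Ioc_le_mul_sub (hc : MonotoneOn c (Set.Icc a b)) (hA : AntitoneOn A (Set.Icc a b))
    (hab : a ≤ b) : ∑ j ∈ Ioc a b, A j * (c j - c (j - 1)) ≤ A a * (c b - c a) := by
  rw [← sum_Ioc_sub_pred c hab, mul_sum]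
  refine sum_le_sum fun j hj => mul_le_mul_of_nonneg_right ?_ (sub_pred_nonneg hc hj)
  obtain ⟨haj, hjb⟩ := mem_Ioc.1 hj
  exact hA ⟨le_rfl, hab⟩ ⟨haj.le, hjb⟩ haj.le

end

def infoRent (K : ℕ) (A c : ℕ → ℝ) (t : ℕ) : ℝ :=
  ∑ j ∈ Ioc t K, A j * (c j - c (j - 1))

namespace infoRent

variable {K : ℕ} {A c : ℕ → ℝ} {s t : ℕ}

theorem sub_eq_sum_Ioc (hts : t ≤ s) (hsK : s ≤ K) :
    infoRent K A c t - infoRent K A c s = ∑ j ∈ Ioc t s, A j * (c j - c (j - 1)) := by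
  rw [infoRent, infoRent, ← sum_Ioc_consecutive _ hts hsK, add_sub_cancel_right]

theorem nonneg (hc : MonotoneOn c (Set.Icc t K)) (hA : ∀ j ∈ Ioc t K, 0 ≤ A j) :
    0 ≤ infoRent K A c t :=
  sum_nonneg fun j hj => mul_nonneg (hA j hj) (sub_pred_nonneg hc hj)

theorem add_mul_sub_le (hc : MonotoneOn c (Set.Icc 1 K)) (hA : AntitoneOn A (Set.Icc 1 K))
    (ht : t ∈ Icc 1 K) (hs : s ∈ Icc 1 K) :
    infoRent K A c s + (c s - c t) * A s ≤ infoRent K A c t := by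
  obtain ⟨ht1, htK⟩ := mem_Icc.1 ht
  obtain ⟨hs1, hsK⟩ := mem_Icc.1 hs
  rcases le_total t s with hts | hst
  · have hsub : Set.Icc t s ⊆ Set.Icc 1 K := Set.Icc_subset_Icc ht1 hsK
    have := mul_sub_le_sum_Ioc (hc.mono hsub) (hA.mono hsub) hts
    linarith [sub_eq_sum_Ioc (A := A) (c := c) hts hsK]
  · have hsub : Set.Icc s t ⊆ Set.Icc 1 K := Set.Icc_subset_Icc hs1 htK
    have := sum_Ioc_le_mul_sub (hc.mono hsub) (hA.mono hsub) hst
    linarith [sub_eq_sum_Ioc (A := A) (c := c) hst htK]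

end infoRent

theorem Pstar_mechanism_truthful_IR_general
    (K : ℕ) (c A Pstar : ℕ → ℝ)
    (hcmono : ∀ j ∈ Finset.Icc 1 (K - 1), c j < c (j + 1))
    (hApos : ∀ t ∈ Finset.Icc 1 K, 0 < A t)
    (hAmono : ∀ j ∈ Finset.Icc 1 (K - 1), A (j + 1) ≤ A j)
    (hPstar : ∀ t ∈ Finset.Icc 1 K,
      Pstar t = c t + ∑ j ∈ Finset.Icc (t + 1) K, (A j / A t) * (c j - c (j - 1))) :
    (∀ t ∈ Finset.Icc 1 K, ∀ s ∈ Finset.Icc 1 K,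
      (Pstar s - c t) * A s ≤ (Pstar t - c t) * A t) ∧
    (∀ t ∈ Finset.Icc 1 K, c t ≤ Pstar t) := by
  have hc : MonotoneOn c (Set.Icc 1 K) := monotoneOn_Icc_of_le_add_one fun j hj => (hcmono j hj).le
  have hA : AntitoneOn A (Set.Icc 1 K) := antitoneOn_Icc_of_add_one_le hAmono
  have hrent : ∀ t ∈ Icc 1 K, (Pstar t - c t) * A t = infoRent K A c t := fun t ht => by
    rw [hPstar t ht, add_sub_cancel_left, sum_mul, infoRent, ← Icc_add_one_left_eq_Ioc]
    refine sum_congr rfl fun j _ => ?_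
    field_simp [(hApos t ht).ne']
  refine ⟨fun t ht s hs => ?_, fun t ht => ?_⟩
  · calc (Pstar s - c t) * A s = (Pstar s - c s) * A s + (c s - c t) * A s := by ring
      _ ≤ (Pstar t - c t) * A t := by
        rw [hrent s hs, hrent t ht]
        exact infoRent.add_mul_sub_le hc hA ht hs
  · obtain ⟨ht1, -⟩ := mem_Icc.1 ht
    have hrent_nonneg : 0 ≤ (Pstar t - c t) * A t := hrent t ht ▸ infoRent.nonneg
      (hc.mono (Set.Icc_subset_Icc_left ht1))
      fun j hj => (hApos j (Icc_subset_Icc_left ht1 (Ioc_subset_Icc_self hj))).le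
    exact sub_nonneg.1 (nonneg_of_mul_nonneg_left hrent_nonneg (hApos t ht))

/-- The mechanism `(A, P*(A))` with the canonical payments `P*` is
truthful and individually rational. Costs are indexed by `{1, …, K}`. -/
theorem Pstar_mechanism_truthful_IR
    (K : ℕ) (hK : 1 ≤ K) (c A Pstar : ℕ → ℝ)
    (hc1 : 0 < c 1)
    (hcmono : ∀ j ∈ Finset.Icc 1 (K - 1), c j < c (j + 1))
    (hApos : ∀ t ∈ Finset.Icc 1 K, 0 < A t)
    (hAle1 : ∀ t ∈ Finset.Icc 1 K, A t ≤ 1)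
    (hAmono : ∀ j ∈ Finset.Icc 1 (K - 1), A (j + 1) ≤ A j)
    (hPstar : ∀ t ∈ Finset.Icc 1 K,
      Pstar t = c t + ∑ j ∈ Finset.Icc (t + 1) K, (A j / A t) * (c j - c (j - 1))) :
    (∀ t ∈ Finset.Icc 1 K, ∀ s ∈ Finset.Icc 1 K,
      (Pstar s - c t) * A s ≤ (Pstar t - c t) * A t) ∧
    (∀ t ∈ Finset.Icc 1 K, c t ≤ Pstar t) :=
  Pstar_mechanism_truthful_IR_general K c A Pstar hcmono hApos hAmono hPstar
end

section
/- Let A be a monotone non-increasing allocation rule with A_t ∈ (0,1] for all t, and let P*_K(A) = c_K and P*_t(A) = c_t + Σ_{j=t+1}^K (A_j/A_t)(c_j − c_{j−1}) for t < K. Define the virtual costs φ(c_1) = c_1 and, for j ≥ 2, φ(c_j) = c_j + (c_j − c_{j−1})·(Σ_{s=1}^{j−1} π_s)/π_j. Then the expected payment satisfies Σ_{t=1}^K π_t · P*_t(A) · A_t = Σ_{t=1}^K π_t · φ(c_t) · A_t. -/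
/-! Expanding `P*_t` and `φ(c_t)`, both sides equal `∑ π_t c_t A_t` plus a double sum of
`π_t A_j (c_j - c_{j-1})`: over pairs `t < j` grouped by the lower index `t` on the payment side
and by the upper index `j` on the virtual-cost side. -/

open Finset

theorem sum_Icc_sum_Icc_succ_comm {M : Type*} [AddCommMonoid M] (K : ℕ) (f : ℕ → ℕ → M) :
    ∑ t ∈ Icc 1 K, ∑ j ∈ Icc (t + 1) K, f t j = ∑ j ∈ Icc 1 K, ∑ t ∈ Icc 1 (j - 1), f t j :=
  sum_comm' fun t j => by simp only [mem_Icc]; omega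

theorem mul_add_sum_div_mul_eq {ι : Type*} (s : Finset ι) (x d : ι → ℝ) (p c a : ℝ)
    (ha : a ≠ 0) :
    p * (c + ∑ j ∈ s, x j / a * d j) * a = p * c * a + ∑ j ∈ s, p * (x j * d j) := by
  rw [mul_add, add_mul, mul_sum, sum_mul]
  congr 1
  refine sum_congr rfl fun j _ => ?_
  field_simp

theorem mul_add_mul_div_mul_eq (p c d S a : ℝ) (hp : p ≠ 0) :
    p * (c + d * S / p) * a = p * c * a + S * (a * d) := by
  field_simp

theorem expected_payment_eq_expected_virtual_cost_general
    (K : ℕ) (c A Pstar phi π : ℕ → ℝ)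
    (hπpos : ∀ t ∈ Finset.Icc 1 K, 0 < π t)
    (hApos : ∀ t ∈ Finset.Icc 1 K, 0 < A t)
    (hPstar : ∀ t ∈ Finset.Icc 1 K,
      Pstar t = c t + ∑ j ∈ Finset.Icc (t + 1) K, (A j / A t) * (c j - c (j - 1)))
    (hphi1 : phi 1 = c 1)
    (hphij : ∀ j ∈ Finset.Icc 2 K,
      phi j = c j + (c j - c (j - 1)) * (∑ s ∈ Finset.Icc 1 (j - 1), π s) / π j) :
    ∑ t ∈ Finset.Icc 1 K, π t * Pstar t * A t
      = ∑ t ∈ Finset.Icc 1 K, π t * phi t * A t := by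
  have hpayment : ∀ t ∈ Icc 1 K, π t * Pstar t * A t
      = π t * c t * A t + ∑ j ∈ Icc (t + 1) K, π t * (A j * (c j - c (j - 1))) := fun t ht => by
    rw [hPstar t ht, mul_add_sum_div_mul_eq _ _ _ _ _ _ (hApos t ht).ne']
  have hvirtual : ∀ t ∈ Icc 1 K, π t * phi t * A t
      = π t * c t * A t + (∑ s ∈ Icc 1 (t - 1), π s) * (A t * (c t - c (t - 1))) := by
    intro t ht
    obtain rfl | ht2 : t = 1 ∨ t ∈ Icc 2 K := by simp only [mem_Icc] at ht ⊢; omega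
    · simp [hphi1]
    · rw [hphij t ht2, mul_add_mul_div_mul_eq _ _ _ _ _ (hπpos t ht).ne']
  rw [sum_congr rfl hpayment, sum_congr rfl hvirtual, sum_add_distrib, sum_add_distrib,
    sum_Icc_sum_Icc_succ_comm]
  exact congrArg _ (sum_congr rfl fun j _ => (sum_mul _ _ _).symm)

/-- The expected payment under the canonical payments `P*` equals the
expected virtual cost weighted by the allocation rule.
Costs are indexed by `{1, …, K}`. -/
theorem expected_payment_eq_expected_virtual_cost
    (K : ℕ) (hK : 1 ≤ K) (c A Pstar phi π : ℕ → ℝ)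
    (hc1 : 0 < c 1)
    (hcmono : ∀ j ∈ Finset.Icc 1 (K - 1), c j < c (j + 1))
    (hπpos : ∀ t ∈ Finset.Icc 1 K, 0 < π t)
    (hπsum : ∑ t ∈ Finset.Icc 1 K, π t = 1)
    (hApos : ∀ t ∈ Finset.Icc 1 K, 0 < A t)
    (hAle1 : ∀ t ∈ Finset.Icc 1 K, A t ≤ 1)
    (hAmono : ∀ j ∈ Finset.Icc 1 (K - 1), A (j + 1) ≤ A j)
    (hPstar : ∀ t ∈ Finset.Icc 1 K,
      Pstar t = c t + ∑ j ∈ Finset.Icc (t + 1) K, (A j / A t) * (c j - c (j - 1)))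
    (hphi1 : phi 1 = c 1)
    (hphij : ∀ j ∈ Finset.Icc 2 K,
      phi j = c j + (c j - c (j - 1)) * (∑ s ∈ Finset.Icc 1 (j - 1), π s) / π j) :
    ∑ t ∈ Finset.Icc 1 K, π t * Pstar t * A t
      = ∑ t ∈ Finset.Icc 1 K, π t * phi t * A t :=
  expected_payment_eq_expected_virtual_cost_general K c A Pstar phi π hπpos hApos hPstar hphi1 hphij
end

section
/- Let A ∈ (0,1]^K be an allocation rule. For any family μ = (μ_1, …, μ_K) of Borel probability measures on [0,1] (interpreted as the conditional distributions of the moment value given each cost), define W(A, μ) = Σ_{t=1}^K π_t·(∫ s² dμ_t(s))/A_t − (Σ_{t=1}^K π_t·∫ s dμ_t(s))². Then sup over all such families μ of W(A, μ) equals sup_{q ∈ [0,1]^K} V(A,q). -/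
open MeasureTheory

lemma bern_integral (q : ℝ) (h0 : 0 ≤ q) (h1 : q ≤ 1) (f : ℝ → ℝ) :
    ∫ s, f s ∂(ENNReal.ofReal q • Measure.dirac (1:ℝ)
      + ENNReal.ofReal (1-q) • Measure.dirac (0:ℝ)) = q * f 1 + (1-q) * f 0 := by
  have h1' : Integrable f (Measure.dirac (1:ℝ)) :=
    (integrable_const (f 1)).congr (ae_eq_dirac f).symm
  have h0' : Integrable f (Measure.dirac (0:ℝ)) :=
    (integrable_const (f 0)).congr (ae_eq_dirac f).symm
  rw [integral_add_measure (h1'.smul_measure (by simp)) (h0'.smul_measure (by simp))]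
  simp [integral_smul_measure, ENNReal.toReal_ofReal h0,
    ENNReal.toReal_ofReal (by linarith : (0:ℝ) ≤ 1-q), integral_dirac, mul_comm]

lemma bern_prob (q : ℝ) (h0 : 0 ≤ q) (h1 : q ≤ 1) :
    IsProbabilityMeasure (ENNReal.ofReal q • Measure.dirac (1:ℝ)
      + ENNReal.ofReal (1-q) • Measure.dirac (0:ℝ)) := by
  constructor
  simp [Measure.add_apply, ← ENNReal.ofReal_add h0 (by linarith : (0:ℝ) ≤ 1-q)]

lemma bern_supp (q : ℝ) (h0 : 0 ≤ q) (h1 : q ≤ 1) :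
    (ENNReal.ofReal q • Measure.dirac (1:ℝ)
      + ENNReal.ofReal (1-q) • Measure.dirac (0:ℝ)) (Set.Icc (0:ℝ) 1) = 1 := by
  rw [Measure.add_apply]
  simp [Measure.dirac_apply' _ measurableSet_Icc,
    ← ENNReal.ofReal_add h0 (by linarith : (0:ℝ) ≤ 1-q)]

lemma moments (μ : Measure ℝ) [IsProbabilityMeasure μ] (h : μ (Set.Icc 0 1) = 1) :
    0 ≤ ∫ s, s ∂μ ∧ ∫ s, s ∂μ ≤ 1 ∧ ∫ s, s^2 ∂μ ≤ ∫ s, s ∂μ ∧ ∫ s, s^2 ∂μ ≤ 1 := by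
  have hc : μ (Set.Icc (0:ℝ) 1)ᶜ = 0 := by
    rw [measure_compl measurableSet_Icc (by simp), h]; simp
  have hae : ∀ᵐ s ∂μ, s ∈ Set.Icc (0:ℝ) 1 := by
    rw [ae_iff]
    have : {x : ℝ | ¬ x ∈ Set.Icc (0:ℝ) 1} = (Set.Icc (0:ℝ) 1)ᶜ := rfl
    rw [this]; exact hc
  have i1 : Integrable (fun s : ℝ => s) μ := by
    refine (integrable_const (1:ℝ)).mono' measurable_id.aestronglyMeasurable ?_
    filter_upwards [hae] with s hs
    rw [Real.norm_eq_abs, abs_of_nonneg hs.1]; exact hs.2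
  have i2 : Integrable (fun s : ℝ => s^2) μ := by
    refine (integrable_const (1:ℝ)).mono' (by fun_prop) ?_
    filter_upwards [hae] with s hs
    rw [Real.norm_eq_abs, abs_of_nonneg (sq_nonneg s)]
    nlinarith [hs.1, hs.2]
  have h21 : ∫ s, s^2 ∂μ ≤ ∫ s, s ∂μ := by
    refine integral_mono_ae i2 i1 ?_
    filter_upwards [hae] with s hs
    nlinarith [hs.1, hs.2]
  have h11 : ∫ s, s ∂μ ≤ 1 := by
    calc ∫ s, s ∂μ ≤ ∫ _, (1:ℝ) ∂μ := by
          refine integral_mono_ae i1 (integrable_const 1) ?_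
          filter_upwards [hae] with s hs; exact hs.2
      _ = 1 := by simp
  exact ⟨integral_nonneg_of_ae (hae.mono fun s hs => hs.1), h11, h21, h21.trans h11⟩

/-- The worst case over all families of conditional moment distributions
on `[0,1]` of the Horvitz–Thompson variance functional `W(A, μ)` equals the worst case
over conditional means `q ∈ [0,1]^K` of `V(A, q)`. Costs are indexed by `{1, …, K}`. -/
theorem worst_case_over_measures_eq_worst_case_over_means
    (K : ℕ) (hK : 1 ≤ K) (c π A : ℕ → ℝ)
    (hc : ∀ t ∈ Finset.Icc 1 K, 0 < c t)
    (hcmono : ∀ j ∈ Finset.Icc 1 (K - 1), c j < c (j + 1))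
    (hπpos : ∀ t ∈ Finset.Icc 1 K, 0 < π t)
    (hπsum : ∑ t ∈ Finset.Icc 1 K, π t = 1)
    (hApos : ∀ t ∈ Finset.Icc 1 K, 0 < A t)
    (hAle1 : ∀ t ∈ Finset.Icc 1 K, A t ≤ 1) :
    sSup {w : ℝ | ∃ μ : ℕ → Measure ℝ,
        (∀ t, IsProbabilityMeasure (μ t)) ∧
        (∀ t, μ t (Set.Icc (0 : ℝ) 1) = 1) ∧
        w = (∑ t ∈ Finset.Icc 1 K, π t * (∫ s, s ^ 2 ∂(μ t)) / A t)
          - (∑ t ∈ Finset.Icc 1 K, π t * ∫ s, s ∂(μ t)) ^ 2}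
      = sSup {w : ℝ | ∃ q : ℕ → ℝ,
          (∀ t ∈ Finset.Icc 1 K, q t ∈ Set.Icc (0 : ℝ) 1) ∧
          w = (∑ t ∈ Finset.Icc 1 K, π t * q t / A t)
            - (∑ t ∈ Finset.Icc 1 K, π t * q t) ^ 2} := by
  set S := {w : ℝ | ∃ μ : ℕ → Measure ℝ,
        (∀ t, IsProbabilityMeasure (μ t)) ∧
        (∀ t, μ t (Set.Icc (0 : ℝ) 1) = 1) ∧
        w = (∑ t ∈ Finset.Icc 1 K, π t * (∫ s, s ^ 2 ∂(μ t)) / A t)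
          - (∑ t ∈ Finset.Icc 1 K, π t * ∫ s, s ∂(μ t)) ^ 2} with hS
  set T := {w : ℝ | ∃ q : ℕ → ℝ,
          (∀ t ∈ Finset.Icc 1 K, q t ∈ Set.Icc (0 : ℝ) 1) ∧
          w = (∑ t ∈ Finset.Icc 1 K, π t * q t / A t)
            - (∑ t ∈ Finset.Icc 1 K, π t * q t) ^ 2} with hT
  have hbd : ∀ t ∈ Finset.Icc 1 K, (0:ℝ) ≤ π t / A t := fun t ht =>
    div_nonneg (hπpos t ht).le (hApos t ht).le
  -- T ⊆ S via Bernoulli measures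
  have hTS : T ⊆ S := by
    rintro w ⟨q, hq, rfl⟩
    set q' : ℕ → ℝ := fun t => if t ∈ Finset.Icc 1 K then q t else 0 with hq'
    have hq'0 : ∀ t, 0 ≤ q' t := by
      intro t; dsimp only [q']; split
      · exact (hq t (by assumption)).1
      · exact le_rfl
    have hq'1 : ∀ t, q' t ≤ 1 := by
      intro t; dsimp only [q']; split
      · exact (hq t (by assumption)).2
      · exact zero_le_one
    refine ⟨fun t => ENNReal.ofReal (q' t) • Measure.dirac 1
        + ENNReal.ofReal (1 - q' t) • Measure.dirac 0,
      fun t => bern_prob _ (hq'0 t) (hq'1 t),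
      fun t => bern_supp _ (hq'0 t) (hq'1 t), ?_⟩
    congr 1
    · refine Finset.sum_congr rfl fun t ht => ?_
      rw [bern_integral _ (hq'0 t) (hq'1 t) (fun s => s ^ 2)]
      simp [q', (Finset.mem_Icc.mp ht).1, (Finset.mem_Icc.mp ht).2]
    · congr 1
      refine Finset.sum_congr rfl fun t ht => ?_
      rw [bern_integral _ (hq'0 t) (hq'1 t) (fun s => s)]
      simp [q', (Finset.mem_Icc.mp ht).1, (Finset.mem_Icc.mp ht).2]
  have h0T : (0:ℝ) ∈ T := ⟨fun _ => 0, fun t ht => ⟨le_rfl, zero_le_one⟩, by simp⟩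
  have hT_ne : T.Nonempty := ⟨0, h0T⟩
  have hS_ne : S.Nonempty := ⟨0, hTS h0T⟩
  have hTB : ∀ w ∈ T, w ≤ ∑ t ∈ Finset.Icc 1 K, π t / A t := by
    rintro w ⟨q, hq, rfl⟩
    have : ∑ t ∈ Finset.Icc 1 K, π t * q t / A t ≤ ∑ t ∈ Finset.Icc 1 K, π t / A t := by
      refine Finset.sum_le_sum fun t ht => ?_
      rw [div_le_div_iff_of_pos_right (hApos t ht)]
      nlinarith [(hπpos t ht).le, (hq t ht).1, (hq t ht).2]
    nlinarith [sq_nonneg (∑ t ∈ Finset.Icc 1 K, π t * q t)]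
  have hSB : ∀ w ∈ S, w ≤ ∑ t ∈ Finset.Icc 1 K, π t / A t := by
    rintro w ⟨μ, hprob, hsupp, rfl⟩
    have : ∑ t ∈ Finset.Icc 1 K, π t * (∫ s, s ^ 2 ∂(μ t)) / A t
        ≤ ∑ t ∈ Finset.Icc 1 K, π t / A t := by
      refine Finset.sum_le_sum fun t ht => ?_
      haveI := hprob t
      obtain ⟨hm0, hm1, hm21, hm2⟩ := moments (μ t) (hsupp t)
      rw [div_le_div_iff_of_pos_right (hApos t ht)]
      nlinarith [(hπpos t ht).le, hm21.trans' (by positivity : (0:ℝ) ≤ ∫ s, s^2 ∂(μ t))]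
    nlinarith [sq_nonneg (∑ t ∈ Finset.Icc 1 K, π t * ∫ s, s ∂(μ t))]
  refine le_antisymm ?_ (csSup_le_csSup ⟨_, hSB⟩ hT_ne hTS)
  refine csSup_le hS_ne ?_
  rintro w ⟨μ, hprob, hsupp, rfl⟩
  set q : ℕ → ℝ := fun t => if t ∈ Finset.Icc 1 K then ∫ s, s ∂(μ t) else 0 with hqdef
  have hqmem : ∀ t ∈ Finset.Icc 1 K, q t ∈ Set.Icc (0:ℝ) 1 := by
    intro t ht
    haveI := hprob t
    obtain ⟨hm0, hm1, _, _⟩ := moments (μ t) (hsupp t)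
    simp only [q, ht, if_true]
    exact ⟨hm0, hm1⟩
  have hVmem : (∑ t ∈ Finset.Icc 1 K, π t * q t / A t)
      - (∑ t ∈ Finset.Icc 1 K, π t * q t) ^ 2 ∈ T := ⟨q, hqmem, rfl⟩
  refine le_trans ?_ (le_csSup ⟨_, hTB⟩ hVmem)
  have hsq : (∑ t ∈ Finset.Icc 1 K, π t * ∫ s, s ∂(μ t))
      = ∑ t ∈ Finset.Icc 1 K, π t * q t := by
    refine Finset.sum_congr rfl fun t ht => ?_
    simp [q, (Finset.mem_Icc.mp ht).1, (Finset.mem_Icc.mp ht).2]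
  rw [hsq]
  refine sub_le_sub_right (Finset.sum_le_sum fun t ht => ?_) _
  haveI := hprob t
  obtain ⟨hm0, hm1, hm21, _⟩ := moments (μ t) (hsupp t)
  have hqt : q t = ∫ s, s ∂(μ t) := by
    simp [q, (Finset.mem_Icc.mp ht).1, (Finset.mem_Icc.mp ht).2]
  rw [div_le_div_iff_of_pos_right (hApos t ht), hqt]
  nlinarith [(hπpos t ht).le]
end

section
/- Let A ∈ (0,1]^K be an allocation rule and d ≥ 1 an integer. For any family μ = (μ_1, …, μ_K) of Borel probability measures on the cube [0,1]^d, define W_d(A, μ) = Σ_{r=1}^d [ Σ_{t=1}^K π_t·(∫ s_r² dμ_t(s))/A_t − (Σ_{t=1}^K π_t·∫ s_r dμ_t(s))² ]. Then sup over all such families μ of W_d(A, μ) equals d · sup_{q ∈ [0,1]^K} V(A,q). -/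
/-!
A coordinate `x r` of a point of `[0,1]^d` satisfies `x r ^ 2 ≤ x r`, so each coordinate's second
moments are bounded by its first moments `q t ∈ [0,1]`, and the `r`-th term of `W_d(A, μ)` is at
most `V(A, q)`; summing gives `W_d ≤ d · sup V`. Conversely, putting mass `q t` on the corner
`(1, …, 1)` and the rest on `0` makes the second moments equal the first in every coordinate at
once, so each of the `d` terms equals `V(A, q)`.
-/

open MeasureTheory Set Pointwise

section Moments

variable {α : Type*} [MeasurableSpace α] {μ : Measure α} {f : α → ℝ}

theorem integral_sq_le_integral_of_ae_mem_Icc [IsFiniteMeasure μ] (hf : AEMeasurable f μ)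
    (h01 : ∀ᵐ x ∂μ, f x ∈ Icc 0 1) : ∫ x, f x ^ 2 ∂μ ≤ ∫ x, f x ∂μ := by
  refine integral_mono_ae (.of_mem_Icc 0 1 (hf.pow_const 2) ?_) (.of_mem_Icc 0 1 hf h01) ?_
  · filter_upwards [h01] with x ⟨h0, h1⟩ using ⟨by positivity, pow_le_one₀ h0 h1⟩
  · filter_upwards [h01] with x ⟨h0, h1⟩ using by nlinarith

theorem integral_mem_Icc_of_ae_mem_Icc [IsProbabilityMeasure μ] (hf : AEMeasurable f μ)
    (h01 : ∀ᵐ x ∂μ, f x ∈ Icc 0 1) : ∫ x, f x ∂μ ∈ Icc (0 : ℝ) 1 :=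
  (convex_Icc 0 1).integral_mem isClosed_Icc h01 (.of_mem_Icc 0 1 hf h01)

end Moments

section Bernoulli

variable {α : Type*} [MeasurableSpace α]

noncomputable def bernoulliMix (p : unitInterval) (x y : α) : Measure α :=
  ENNReal.ofReal p • Measure.dirac x + ENNReal.ofReal (1 - p) • Measure.dirac y

theorem bernoulliMix_apply_of_mem (p : unitInterval) {x y : α} {s : Set α} (hx : x ∈ s)
    (hy : y ∈ s) : bernoulliMix p x y s = 1 := by
  rw [bernoulliMix, Measure.add_apply, Measure.smul_apply, Measure.smul_apply,
    Measure.dirac_apply_of_mem hx, Measure.dirac_apply_of_mem hy, smul_eq_mul, smul_eq_mul,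
    mul_one, mul_one, ← ENNReal.ofReal_add p.2.1 (sub_nonneg.2 p.2.2), add_sub_cancel,
    ENNReal.ofReal_one]

instance (p : unitInterval) (x y : α) : IsProbabilityMeasure (bernoulliMix p x y) :=
  ⟨bernoulliMix_apply_of_mem p trivial trivial⟩

theorem integral_bernoulliMix [MeasurableSingletonClass α] (p : unitInterval) (x y : α)
    (f : α → ℝ) : ∫ z, f z ∂bernoulliMix p x y = p * f x + (1 - p) * f y := by
  rw [bernoulliMix, integral_add_measure, integral_smul_measure, integral_smul_measure,
    integral_dirac, integral_dirac, ENNReal.toReal_ofReal p.2.1,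
    ENNReal.toReal_ofReal (sub_nonneg.2 p.2.2), smul_eq_mul, smul_eq_mul]
  all_goals exact (integrable_dirac enorm_lt_top).smul_measure ENNReal.ofReal_ne_top

end Bernoulli

section Variance

variable {ι : Type*} (s : Finset ι) (π A : ι → ℝ)

/-- `∑ π t * m t / A t - (∑ π t * q t) ^ 2`: with `m = q` this is the paper's `V(A, q)`; with the
second and first moments of `μ t` in one coordinate, it is that coordinate's term of `W_d(A, μ)`. -/
noncomputable def momentVariance (m q : ι → ℝ) : ℝ :=
  ∑ t ∈ s, π t * m t / A t - (∑ t ∈ s, π t * q t) ^ 2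

def scalarVarianceValues : Set ℝ :=
  {w | ∃ q : ι → ℝ, (∀ t ∈ s, q t ∈ Icc (0 : ℝ) 1) ∧ w = momentVariance s π A q q}

def cubeVarianceValues (d : ℕ) : Set ℝ :=
  {w | ∃ μ : ι → Measure (Fin d → ℝ), (∀ t, IsProbabilityMeasure (μ t)) ∧
    (∀ t, μ t (Icc (0 : Fin d → ℝ) 1) = 1) ∧
    w = ∑ r : Fin d, momentVariance s π A (fun t ↦ ∫ x, x r ^ 2 ∂μ t) (fun t ↦ ∫ x, x r ∂μ t)}

variable {s π A}

theorem momentVariance_mono_left (hπ : ∀ t ∈ s, 0 ≤ π t) (hA : ∀ t ∈ s, 0 ≤ A t)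
    {m m' : ι → ℝ} (q : ι → ℝ) (hm : ∀ t ∈ s, m t ≤ m' t) :
    momentVariance s π A m q ≤ momentVariance s π A m' q := by
  unfold momentVariance
  gcongr with t ht
  · exact hA t ht
  · exact hπ t ht
  · exact hm t ht

theorem momentVariance_congr {m m' q q' : ι → ℝ} (hm : ∀ t ∈ s, m t = m' t)
    (hq : ∀ t ∈ s, q t = q' t) : momentVariance s π A m q = momentVariance s π A m' q' := by
  unfold momentVariance
  congr 1
  · exact Finset.sum_congr rfl fun t ht ↦ by rw [hm t ht]
  · exact congrArg (· ^ 2) (Finset.sum_congr rfl fun t ht ↦ by rw [hq t ht])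

theorem bddAbove_scalarVarianceValues (hπ : ∀ t ∈ s, 0 ≤ π t) (hA : ∀ t ∈ s, 0 ≤ A t) :
    BddAbove (scalarVarianceValues s π A) := by
  refine ⟨∑ t ∈ s, π t * 1 / A t, ?_⟩
  rintro w ⟨q, hq, rfl⟩
  calc momentVariance s π A q q ≤ momentVariance s π A 1 q :=
        momentVariance_mono_left hπ hA q fun t ht ↦ (hq t ht).2
    _ ≤ ∑ t ∈ s, π t * 1 / A t := sub_le_self _ (sq_nonneg _)

theorem zero_mem_scalarVarianceValues : (0 : ℝ) ∈ scalarVarianceValues s π A :=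
  ⟨0, fun _ _ ↦ ⟨le_rfl, zero_le_one⟩, by simp [momentVariance]⟩

theorem momentVariance_moments_le_sSup {α : Type*} [MeasurableSpace α] (hπ : ∀ t ∈ s, 0 ≤ π t)
    (hA : ∀ t ∈ s, 0 ≤ A t) (μ : ι → Measure α) [∀ t, IsProbabilityMeasure (μ t)] {f : α → ℝ}
    (hf : ∀ t, AEMeasurable f (μ t)) (h01 : ∀ t, ∀ᵐ x ∂μ t, f x ∈ Icc 0 1) :
    momentVariance s π A (fun t ↦ ∫ x, f x ^ 2 ∂μ t) (fun t ↦ ∫ x, f x ∂μ t) ≤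
      sSup (scalarVarianceValues s π A) :=
  (momentVariance_mono_left hπ hA _ fun t _ ↦
    integral_sq_le_integral_of_ae_mem_Icc (hf t) (h01 t)).trans <|
    le_csSup (bddAbove_scalarVarianceValues hπ hA)
      ⟨_, fun t _ ↦ integral_mem_Icc_of_ae_mem_Icc (hf t) (h01 t), rfl⟩

theorem le_of_mem_cubeVarianceValues (hπ : ∀ t ∈ s, 0 ≤ π t) (hA : ∀ t ∈ s, 0 ≤ A t) {d : ℕ}
    {w : ℝ} (hw : w ∈ cubeVarianceValues s π A d) : w ≤ d * sSup (scalarVarianceValues s π A) := by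
  obtain ⟨μ, hprob, hcube, rfl⟩ := hw
  have hae : ∀ t, ∀ᵐ x ∂μ t, x ∈ Icc (0 : Fin d → ℝ) 1 := fun t ↦
    (ae_mem_iff_measure_eq measurableSet_Icc.nullMeasurableSet).2 (by rw [hcube, measure_univ])
  calc _ ≤ ∑ _r : Fin d, sSup (scalarVarianceValues s π A) :=
        Finset.sum_le_sum fun r _ ↦ momentVariance_moments_le_sSup hπ hA μ
          (fun t ↦ (measurable_pi_apply r).aemeasurable)
          fun t ↦ (hae t).mono fun x hx ↦ ⟨hx.1 r, hx.2 r⟩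
    _ = d * sSup (scalarVarianceValues s π A) := by simp

theorem smul_scalarVarianceValues_subset (d : ℕ) :
    (d : ℝ) • scalarVarianceValues s π A ⊆ cubeVarianceValues s π A d := by
  rintro _ ⟨_, ⟨q, hq, rfl⟩, rfl⟩
  set p : ι → unitInterval := fun t ↦ projIcc 0 1 zero_le_one (q t)
  have hpq : ∀ t ∈ s, (p t : ℝ) = q t := fun t ht ↦
    congrArg Subtype.val (projIcc_of_mem _ (hq t ht))
  refine ⟨fun t ↦ bernoulliMix (p t) 1 0, fun t ↦ inferInstance, fun t ↦
    bernoulliMix_apply_of_mem _ (right_mem_Icc.2 zero_le_one) (left_mem_Icc.2 zero_le_one), ?_⟩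
  simp only [integral_bernoulliMix, Pi.one_apply, Pi.zero_apply, one_pow, mul_one, ne_eq,
    OfNat.ofNat_ne_zero, not_false_eq_true, zero_pow, mul_zero, add_zero]
  rw [momentVariance_congr hpq hpq, Finset.sum_const, Finset.card_univ, Fintype.card_fin,
    nsmul_eq_mul, smul_eq_mul]

theorem sSup_cubeVarianceValues (hπ : ∀ t ∈ s, 0 ≤ π t) (hA : ∀ t ∈ s, 0 ≤ A t) (d : ℕ) :
    sSup (cubeVarianceValues s π A d) = d * sSup (scalarVarianceValues s π A) := by
  have hne : ((d : ℝ) • scalarVarianceValues s π A).Nonempty :=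
    Set.Nonempty.smul_set ⟨0, zero_mem_scalarVarianceValues⟩
  have hsub := smul_scalarVarianceValues_subset (s := s) (π := π) (A := A) d
  have hle : ∀ w ∈ cubeVarianceValues s π A d, w ≤ d * sSup (scalarVarianceValues s π A) :=
    fun _ ↦ le_of_mem_cubeVarianceValues hπ hA
  refine le_antisymm (csSup_le (hne.mono hsub) hle) ?_
  rw [← smul_eq_mul, ← Real.sSup_smul_of_nonneg d.cast_nonneg]
  exact csSup_le_csSup ⟨_, hle⟩ hne hsub

end Variance

theorem worst_case_multidimensional_eq_d_times_scalar_general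
    (K : ℕ) (d : ℕ) (π A : ℕ → ℝ)
    (hπpos : ∀ t ∈ Finset.Icc 1 K, 0 < π t)
    (hApos : ∀ t ∈ Finset.Icc 1 K, 0 < A t) :
    sSup {w : ℝ | ∃ μ : ℕ → Measure (Fin d → ℝ),
        (∀ t, IsProbabilityMeasure (μ t)) ∧
        (∀ t, μ t (Set.Icc (0 : Fin d → ℝ) 1) = 1) ∧
        w = ∑ r : Fin d,
          ((∑ t ∈ Finset.Icc 1 K, π t * (∫ s, (s r) ^ 2 ∂(μ t)) / A t)
            - (∑ t ∈ Finset.Icc 1 K, π t * ∫ s, s r ∂(μ t)) ^ 2)}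
      = (d : ℝ) * sSup {w : ℝ | ∃ q : ℕ → ℝ,
          (∀ t ∈ Finset.Icc 1 K, q t ∈ Set.Icc (0 : ℝ) 1) ∧
          w = (∑ t ∈ Finset.Icc 1 K, π t * q t / A t)
            - (∑ t ∈ Finset.Icc 1 K, π t * q t) ^ 2} :=
  sSup_cubeVarianceValues (fun t ht ↦ (hπpos t ht).le) (fun t ht ↦ (hApos t ht).le) d

/-- For `d`-dimensional moments, the worst case over all families of
conditional distributions on the cube `[0,1]^d` of the coordinate-wise Horvitz–Thompson
variance functional `W_d(A, μ)` equals `d` times the one-dimensional worst case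
`sup_{q ∈ [0,1]^K} V(A, q)`. Costs are indexed by `{1, …, K}`. -/
theorem worst_case_multidimensional_eq_d_times_scalar
    (K : ℕ) (hK : 1 ≤ K) (d : ℕ) (hd : 1 ≤ d) (c π A : ℕ → ℝ)
    (hc : ∀ t ∈ Finset.Icc 1 K, 0 < c t)
    (hcmono : ∀ j ∈ Finset.Icc 1 (K - 1), c j < c (j + 1))
    (hπpos : ∀ t ∈ Finset.Icc 1 K, 0 < π t)
    (hπsum : ∑ t ∈ Finset.Icc 1 K, π t = 1)
    (hApos : ∀ t ∈ Finset.Icc 1 K, 0 < A t)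
    (hAle1 : ∀ t ∈ Finset.Icc 1 K, A t ≤ 1) :
    sSup {w : ℝ | ∃ μ : ℕ → Measure (Fin d → ℝ),
        (∀ t, IsProbabilityMeasure (μ t)) ∧
        (∀ t, μ t (Set.Icc (0 : Fin d → ℝ) 1) = 1) ∧
        w = ∑ r : Fin d,
          ((∑ t ∈ Finset.Icc 1 K, π t * (∫ s, (s r) ^ 2 ∂(μ t)) / A t)
            - (∑ t ∈ Finset.Icc 1 K, π t * ∫ s, s r ∂(μ t)) ^ 2)}
      = (d : ℝ) * sSup {w : ℝ | ∃ q : ℕ → ℝ,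
          (∀ t ∈ Finset.Icc 1 K, q t ∈ Set.Icc (0 : ℝ) 1) ∧
          w = (∑ t ∈ Finset.Icc 1 K, π t * q t / A t)
            - (∑ t ∈ Finset.Icc 1 K, π t * q t) ^ 2} :=
  worst_case_multidimensional_eq_d_times_scalar_general K d π A hπpos hApos
end

section
/- Fix q ∈ (0,1]^K with q_t > 0 for all t, and suppose λ* > 0 satisfies Σ_{t=1}^K π_t·c_t·min(1, √(q_t/(λ*·c_t))) = B̄. Define A by A_t = min(1, √(q_t/(λ*·c_t))). Then A is a budget-feasible allocation rule and V(A,q) ≤ V(A',q) for every budget-feasible allocation rule A' ∈ (0,1]^K; equivalently, Σ_{t=1}^K π_t·q_t/A_t ≤ Σ_{t=1}^K π_t·q_t/A'_t for every A' ∈ (0,1]^K with Σ_{t=1}^K π_t·c_t·A'_t ≤ B̄. -/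
/-! On `(0, 1]` the function `a ↦ q / a + λ c a` is minimized at `min 1 √(q / (λ c))`, so `A`
minimizes the Lagrangian `∑ π q / A + λ ∑ π c A` coordinatewise. As `A` exhausts the budget,
every feasible `A'` spends no more than `A`, and weak duality gives
`∑ π q / A ≤ ∑ π q / A'`; subtracting the common square yields the inequality for `V`. -/

lemma div_add_mul_min_sqrt_le {q L a : ℝ} (hq : 0 ≤ q) (hL : 0 < L) (ha : 0 < a)
    (ha1 : a ≤ 1) :
    q / min 1 √(q / L) + L * min 1 √(q / L) ≤ q / a + L * a := by
  set s := √(q / L)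
  have hq_eq : q = L * (s * s) := by
    rw [Real.mul_self_sqrt (div_nonneg hq hL.le)]; field_simp
  rcases le_total 1 s with hs | hs
  · have hLq : L ≤ q :=
      hq_eq ▸ le_mul_of_one_le_right hL.le (one_le_mul_of_one_le_of_one_le hs hs)
    have hdiff : q / a + L * a - (q / 1 + L * 1) = (1 - a) * (q - L * a) / a := by
      field_simp; ring
    have : 0 ≤ (1 - a) * (q - L * a) / a := by
      exact div_nonneg (mul_nonneg (by linarith) (by nlinarith)) ha.le
    rw [min_eq_left hs]
    linarith
  · have hqs : q / s = L * s := by rw [hq_eq, mul_div_assoc, mul_self_div_self]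
    have hdiff : q / a + L * a - (q / s + L * s) = L * (s - a) ^ 2 / a := by
      rw [hqs, hq_eq]; field_simp; ring
    have : 0 ≤ L * (s - a) ^ 2 / a := by positivity
    rw [min_eq_right hs]
    linarith

theorem sum_div_le_sum_div_of_budget_le {ι : Type*} {s : Finset ι} {p c q A A' : ι → ℝ} {lam : ℝ}
    (hp : ∀ t ∈ s, 0 ≤ p t) (hc : ∀ t ∈ s, 0 < c t) (hq : ∀ t ∈ s, 0 ≤ q t) (hlam : 0 < lam)
    (hA : ∀ t ∈ s, A t = min 1 √(q t / (lam * c t)))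
    (hA' : ∀ t ∈ s, 0 < A' t ∧ A' t ≤ 1)
    (hbudget : ∑ t ∈ s, p t * c t * A' t ≤ ∑ t ∈ s, p t * c t * A t) :
    ∑ t ∈ s, p t * q t / A t ≤ ∑ t ∈ s, p t * q t / A' t := by
  have hlagrangian : ∑ t ∈ s, (p t * q t / A t + lam * (p t * c t * A t))
      ≤ ∑ t ∈ s, (p t * q t / A' t + lam * (p t * c t * A' t)) := by
    refine Finset.sum_le_sum fun t ht => ?_
    have h := div_add_mul_min_sqrt_le (hq t ht) (mul_pos hlam (hc t ht)) (hA' t ht).1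
      (hA' t ht).2
    rw [← hA t ht] at h
    have := mul_le_mul_of_nonneg_left h (hp t ht)
    simp only [mul_add, mul_div_assoc] at this ⊢
    linarith
  rw [Finset.sum_add_distrib, Finset.sum_add_distrib, ← Finset.mul_sum, ← Finset.mul_sum]
    at hlagrangian
  linarith [mul_le_mul_of_nonneg_left hbudget hlam.le]

theorem min_player_best_response_general
    (K : ℕ) (c π q A : ℕ → ℝ) (Bbar lam : ℝ)
    (hc : ∀ t ∈ Finset.Icc 1 K, 0 < c t)
    (hπpos : ∀ t ∈ Finset.Icc 1 K, 0 < π t)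
    (hq : ∀ t ∈ Finset.Icc 1 K, 0 < q t ∧ q t ≤ 1)
    (hlam : 0 < lam)
    (hbinding : ∑ t ∈ Finset.Icc 1 K, π t * c t * min 1 (Real.sqrt (q t / (lam * c t))) = Bbar)
    (hA : ∀ t ∈ Finset.Icc 1 K, A t = min 1 (Real.sqrt (q t / (lam * c t)))) :
    (∀ t ∈ Finset.Icc 1 K, 0 < A t ∧ A t ≤ 1) ∧
    (∑ t ∈ Finset.Icc 1 K, π t * c t * A t ≤ Bbar) ∧
    (∀ A' : ℕ → ℝ, (∀ t ∈ Finset.Icc 1 K, 0 < A' t ∧ A' t ≤ 1) →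
      (∑ t ∈ Finset.Icc 1 K, π t * c t * A' t ≤ Bbar) →
      ((∑ t ∈ Finset.Icc 1 K, π t * q t / A t)
          - (∑ t ∈ Finset.Icc 1 K, π t * q t) ^ 2
        ≤ (∑ t ∈ Finset.Icc 1 K, π t * q t / A' t)
          - (∑ t ∈ Finset.Icc 1 K, π t * q t) ^ 2) ∧
      (∑ t ∈ Finset.Icc 1 K, π t * q t / A t
        ≤ ∑ t ∈ Finset.Icc 1 K, π t * q t / A' t)) := by
  have hA_mem : ∀ t ∈ Finset.Icc 1 K, 0 < A t ∧ A t ≤ 1 := fun t ht => by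
    rw [hA t ht]
    exact ⟨lt_min one_pos (Real.sqrt_pos.2 (div_pos (hq t ht).1 (mul_pos hlam (hc t ht)))),
      min_le_left _ _⟩
  have hA_budget : ∑ t ∈ Finset.Icc 1 K, π t * c t * A t = Bbar := by
    rw [← hbinding]
    exact Finset.sum_congr rfl fun t ht => by rw [hA t ht]
  refine ⟨hA_mem, hA_budget.le, fun A' hA' hA'_budget => ?_⟩
  have hopt := sum_div_le_sum_div_of_budget_le (fun t ht => (hπpos t ht).le) hc
    (fun t ht => (hq t ht).1.le) hlam hA hA' (hA_budget ▸ hA'_budget)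
  exact ⟨sub_le_sub_right hopt _, hopt⟩

/-- Best response of the min player: if `λ* > 0` makes the budget
constraint binding for `A_t = min(1, √(q_t/(λ* c_t)))`, then `A` is a budget-feasible
allocation rule minimizing `V(·, q)` over budget-feasible allocation rules;
equivalently, it minimizes `∑_t π_t q_t / A_t`. Costs are indexed by `{1, …, K}`. -/
theorem min_player_best_response
    (K : ℕ) (hK : 1 ≤ K) (c π q A : ℕ → ℝ) (Bbar lam : ℝ)
    (hc : ∀ t ∈ Finset.Icc 1 K, 0 < c t)
    (hcmono : ∀ j ∈ Finset.Icc 1 (K - 1), c j < c (j + 1))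
    (hπpos : ∀ t ∈ Finset.Icc 1 K, 0 < π t)
    (hπsum : ∑ t ∈ Finset.Icc 1 K, π t = 1)
    (hB : 0 < Bbar)
    (hq : ∀ t ∈ Finset.Icc 1 K, 0 < q t ∧ q t ≤ 1)
    (hlam : 0 < lam)
    (hbinding : ∑ t ∈ Finset.Icc 1 K, π t * c t * min 1 (Real.sqrt (q t / (lam * c t))) = Bbar)
    (hA : ∀ t ∈ Finset.Icc 1 K, A t = min 1 (Real.sqrt (q t / (lam * c t)))) :
    (∀ t ∈ Finset.Icc 1 K, 0 < A t ∧ A t ≤ 1) ∧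
    (∑ t ∈ Finset.Icc 1 K, π t * c t * A t ≤ Bbar) ∧
    (∀ A' : ℕ → ℝ, (∀ t ∈ Finset.Icc 1 K, 0 < A' t ∧ A' t ≤ 1) →
      (∑ t ∈ Finset.Icc 1 K, π t * c t * A' t ≤ Bbar) →
      ((∑ t ∈ Finset.Icc 1 K, π t * q t / A t)
          - (∑ t ∈ Finset.Icc 1 K, π t * q t) ^ 2
        ≤ (∑ t ∈ Finset.Icc 1 K, π t * q t / A' t)
          - (∑ t ∈ Finset.Icc 1 K, π t * q t) ^ 2) ∧
      (∑ t ∈ Finset.Icc 1 K, π t * q t / A t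
        ≤ ∑ t ∈ Finset.Icc 1 K, π t * q t / A' t)) :=
  min_player_best_response_general K c π q A Bbar lam hc hπpos hq hlam hbinding hA
end

section
/- For every k ∈ {1, …, K−1}: R(k,1) ≥ R(k+1,1), Q(k,1) ≤ Q(k+1,1), and B(k,1) ≤ B(k+1,1). -/
/-!
Passing from `k` to `k + 1` moves the index `k + 1` from the second sum to the first.
Every term of `Q(·, 1)` weakly grows: `√(c_t c_k) ≤ √(c_t c_{k+1})`, and the moved term goes
from `√(c_{k+1} c_k)` to `c_{k+1}`. Every term of `R(·, 1)` weakly shrinks: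
`c_t / c_{k+1} ≤ c_t / c_k`, and the moved term is `π_{k+1}` on both sides.
Since `Q ≥ 0` and `R > 0`, `B = Q / R` grows.
-/

open Finset

theorem sum_Icc_add_sum_Icc_le_succ {M : Type*} [AddCommMonoid M] [PartialOrder M]
    [IsOrderedAddMonoid M] {k K : ℕ} (hk : k + 1 ≤ K) {a b a' b' : ℕ → M}
    (ha : ∀ t ∈ Icc 1 k, a t ≤ a' t) (hab : b (k + 1) ≤ a' (k + 1))
    (hb : ∀ t ∈ Icc (k + 2) K, b t ≤ b' t) :
    ∑ t ∈ Icc 1 k, a t + ∑ t ∈ Icc (k + 1) K, b t ≤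
      ∑ t ∈ Icc 1 (k + 1), a' t + ∑ t ∈ Icc (k + 2) K, b' t := by
  rw [sum_Icc_succ_top (by omega), ← add_sum_Ioc_eq_sum_Icc hk, ← Icc_add_one_left_eq_Ioc,
    add_assoc _ (a' (k + 1))]
  exact add_le_add (sum_le_sum ha) (add_le_add hab (sum_le_sum hb))

noncomputable def qAtOne (K : ℕ) (c π : ℕ → ℝ) (k : ℕ) : ℝ :=
  ∑ t ∈ Icc 1 k, π t * c t + ∑ t ∈ Icc (k + 1) K, π t * √(c t * c k)

noncomputable def rAtOne (K : ℕ) (c π : ℕ → ℝ) (k : ℕ) : ℝ :=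
  2 * (∑ t ∈ Icc 1 k, π t * c t / c k + ∑ t ∈ Icc (k + 1) K, π t)

section

variable {K k : ℕ} {c π : ℕ → ℝ}

theorem qAtOne_le_succ (hk : k + 1 ≤ K) (hπ : ∀ t ∈ Icc 1 K, 0 ≤ π t)
    (hc : ∀ t ∈ Icc 1 K, 0 ≤ c t) (hck : c k ≤ c (k + 1)) :
    qAtOne K c π k ≤ qAtOne K c π (k + 1) := by
  have hmem : k + 1 ∈ Icc 1 K := mem_Icc.2 ⟨by omega, hk⟩
  refine sum_Icc_add_sum_Icc_le_succ hk (fun _ _ ↦ le_rfl) ?_ fun t ht ↦ ?_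
  · gcongr
    · exact hπ _ hmem
    calc √(c (k + 1) * c k) ≤ √(c (k + 1) * c (k + 1)) := by gcongr; exact hc _ hmem
      _ = c (k + 1) := Real.sqrt_mul_self (hc _ hmem)
  · have ht' : t ∈ Icc 1 K := Icc_subset_Icc_left (by omega) ht
    gcongr
    exacts [hπ t ht', hc t ht']

theorem rAtOne_succ_le (hk : k + 1 ≤ K) (hπ : ∀ t ∈ Icc 1 K, 0 ≤ π t)
    (hc : ∀ t ∈ Icc 1 K, 0 ≤ c t) (hck₀ : 0 < c k) (hck : c k ≤ c (k + 1)) :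
    rAtOne K c π (k + 1) ≤ rAtOne K c π k := by
  unfold rAtOne
  gcongr 2 * ?_
  -- the same exchange of regimes as for `qAtOne`, read in the order dual
  refine sum_Icc_add_sum_Icc_le_succ (M := ℝᵒᵈ) hk (fun t ht ↦ ?_) ?_ fun _ _ ↦ le_rfl
  · have ht' : t ∈ Icc 1 K := Icc_subset_Icc_right (by omega) ht
    have := hπ t ht'
    have := hc t ht'
    change π t * c t / c (k + 1) ≤ π t * c t / c k
    gcongr
  · change π (k + 1) * c (k + 1) / c (k + 1) ≤ π (k + 1)
    rw [mul_div_cancel_right₀ _ (hck₀.trans_le hck).ne']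

theorem qAtOne_nonneg (hkK : k ≤ K) (hπ : ∀ t ∈ Icc 1 K, 0 ≤ π t)
    (hc : ∀ t ∈ Icc 1 K, 0 ≤ c t) :
    0 ≤ qAtOne K c π k := by
  refine add_nonneg (sum_nonneg fun t ht ↦ ?_) (sum_nonneg fun t ht ↦ ?_)
  · have ht' : t ∈ Icc 1 K := Icc_subset_Icc_right hkK ht
    exact mul_nonneg (hπ t ht') (hc t ht')
  · exact mul_nonneg (hπ t (Icc_subset_Icc_left (by omega) ht)) (Real.sqrt_nonneg _)

theorem rAtOne_pos (hk : k ∈ Icc 1 K) (hπ : ∀ t ∈ Icc 1 K, 0 < π t)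
    (hc : ∀ t ∈ Icc 1 K, 0 < c t) : 0 < rAtOne K c π k := by
  obtain ⟨hk₁, hkK⟩ := mem_Icc.1 hk
  have hsub : Icc 1 k ⊆ Icc 1 K := Icc_subset_Icc_right hkK
  have hterm : π k * c k / c k ≤ ∑ t ∈ Icc 1 k, π t * c t / c k :=
    single_le_sum (f := fun t ↦ π t * c t / c k) (fun t ht ↦
      div_nonneg (mul_pos (hπ t (hsub ht)) (hc t (hsub ht))).le (hc k hk).le)
      (mem_Icc.2 ⟨hk₁, le_rfl⟩)
  rw [mul_div_cancel_right₀ _ (hc k hk).ne'] at hterm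
  have hrest : 0 ≤ ∑ t ∈ Icc (k + 1) K, π t :=
    sum_nonneg fun t ht ↦ (hπ t (Icc_subset_Icc_left (by omega) ht)).le
  unfold rAtOne
  linarith [hπ k hk]

end

theorem QRB_monotone_in_k_general
    (K : ℕ) (c π : ℕ → ℝ) (Q R B : ℕ → ℝ → ℝ)
    (hc : ∀ t ∈ Finset.Icc 1 K, 0 < c t)
    (hcmono : ∀ j ∈ Finset.Icc 1 (K - 1), c j < c (j + 1))
    (hπpos : ∀ t ∈ Finset.Icc 1 K, 0 < π t)
    (hQ : ∀ k ∈ Finset.Icc 1 K, ∀ x ∈ Set.Ioc (0 : ℝ) 1,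
      Q k x = (∑ t ∈ Finset.Icc 1 k, π t * c t)
        + ∑ t ∈ Finset.Icc (k + 1) K, π t * Real.sqrt (c t * c k / x))
    (hR : ∀ k ∈ Finset.Icc 1 K, ∀ x ∈ Set.Ioc (0 : ℝ) 1,
      R k x = 2 * ((∑ t ∈ Finset.Icc 1 k, π t * c t * x / c k)
        + ∑ t ∈ Finset.Icc (k + 1) K, π t))
    (hB : ∀ k ∈ Finset.Icc 1 K, ∀ x ∈ Set.Ioc (0 : ℝ) 1,
      B k x = Q k x / R k x) :
    ∀ k ∈ Finset.Icc 1 (K - 1),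
      R (k + 1) 1 ≤ R k 1 ∧ Q k 1 ≤ Q (k + 1) 1 ∧ B k 1 ≤ B (k + 1) 1 := by
  intro k hk
  obtain ⟨hk₁, hkK⟩ := mem_Icc.1 hk
  have hkK' : k + 1 ≤ K := by omega
  have hkmem : k ∈ Icc 1 K := mem_Icc.2 ⟨hk₁, by omega⟩
  have hk1mem : k + 1 ∈ Icc 1 K := mem_Icc.2 ⟨by omega, hkK'⟩
  have hone : (1 : ℝ) ∈ Set.Ioc 0 1 := ⟨one_pos, le_rfl⟩
  have hQ₁ : ∀ j ∈ Icc 1 K, Q j 1 = qAtOne K c π j := fun j hj ↦ by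
    simp only [hQ j hj 1 hone, div_one, qAtOne]
  have hR₁ : ∀ j ∈ Icc 1 K, R j 1 = rAtOne K c π j := fun j hj ↦ by
    simp only [hR j hj 1 hone, mul_one, rAtOne]
  have hπ₀ : ∀ t ∈ Icc 1 K, 0 ≤ π t := fun t ht ↦ (hπpos t ht).le
  have hc₀ : ∀ t ∈ Icc 1 K, 0 ≤ c t := fun t ht ↦ (hc t ht).le
  have hck : c k ≤ c (k + 1) := (hcmono k hk).le
  have hQle := qAtOne_le_succ hkK' hπ₀ hc₀ hck
  have hRle := rAtOne_succ_le hkK' hπ₀ hc₀ (hc k hkmem) hck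
  rw [hB k hkmem 1 hone, hB (k + 1) hk1mem 1 hone, hQ₁ k hkmem, hQ₁ (k + 1) hk1mem,
    hR₁ k hkmem, hR₁ (k + 1) hk1mem]
  exact ⟨hRle, hQle,
    div_le_div₀ (qAtOne_nonneg hkK' hπ₀ hc₀) hQle (rAtOne_pos hk1mem hπpos hc) hRle⟩

/-- monotonicity in `k` of `R(·,1)`, `Q(·,1)` and `B(·,1)`:
for `k ∈ {1, …, K−1}`, `R(k+1,1) ≤ R(k,1)`, `Q(k,1) ≤ Q(k+1,1)` and
`B(k,1) ≤ B(k+1,1)`. Costs are indexed by `{1, …, K}`. -/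
theorem QRB_monotone_in_k
    (K : ℕ) (hK : 2 ≤ K) (c π : ℕ → ℝ) (Q R B : ℕ → ℝ → ℝ)
    (hc : ∀ t ∈ Finset.Icc 1 K, 0 < c t)
    (hcmono : ∀ j ∈ Finset.Icc 1 (K - 1), c j < c (j + 1))
    (hπpos : ∀ t ∈ Finset.Icc 1 K, 0 < π t)
    (hπsum : ∑ t ∈ Finset.Icc 1 K, π t = 1)
    (hQ : ∀ k ∈ Finset.Icc 1 K, ∀ x ∈ Set.Ioc (0 : ℝ) 1,
      Q k x = (∑ t ∈ Finset.Icc 1 k, π t * c t)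
        + ∑ t ∈ Finset.Icc (k + 1) K, π t * Real.sqrt (c t * c k / x))
    (hR : ∀ k ∈ Finset.Icc 1 K, ∀ x ∈ Set.Ioc (0 : ℝ) 1,
      R k x = 2 * ((∑ t ∈ Finset.Icc 1 k, π t * c t * x / c k)
        + ∑ t ∈ Finset.Icc (k + 1) K, π t))
    (hB : ∀ k ∈ Finset.Icc 1 K, ∀ x ∈ Set.Ioc (0 : ℝ) 1,
      B k x = Q k x / R k x) :
    ∀ k ∈ Finset.Icc 1 (K - 1),
      R (k + 1) 1 ≤ R k 1 ∧ Q k 1 ≤ Q (k + 1) 1 ∧ B k 1 ≤ B (k + 1) 1 :=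
  QRB_monotone_in_k_general K c π Q R B hc hcmono hπpos hQ hR hB
end

section
/- Suppose B(1,1) ≤ B̄ < B(K,1), and let k* ∈ {1, …, K−1} satisfy B(k*,1) ≤ B̄ < B(k*+1,1). Then there is a unique x* ∈ [c_{k*}/c_{k*+1}, 1] such that B(k*, x*) = B̄. -/
/-!
For `x ∈ (0, 1]` the numerator `Q(k*, x)` is antitone in `x` (only the terms `√(c_t c_{k*} / x)`
depend on it) while the denominator `R(k*, x)` is affine with positive slope, so `B(k*, ·)` is
continuous and strictly decreasing there. At `x = c_{k*}/c_{k*+1}` the `(k*+1)`-st summands of `Q`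
and `R` become `π_{k*+1} c_{k*+1}` and `2 π_{k*+1}`, so `B(k*, c_{k*}/c_{k*+1}) = B(k*+1, 1)`.
Hence `B̄` lies between the values of `B(k*, ·)` at the two ends of `[c_{k*}/c_{k*+1}, 1]`, and the
intermediate value theorem together with strict monotonicity gives exactly one solution.
-/

open Finset

theorem Icc_add_one_subset_Icc_one (k K : ℕ) : Icc (k + 1) K ⊆ Icc 1 K :=
  Icc_subset_Icc (Nat.le_add_left 1 k) le_rfl

theorem AntitoneOn.div_strictMonoOn {s : Set ℝ} {f g : ℝ → ℝ} (hf : AntitoneOn f s)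
    (hg : StrictMonoOn g s) (hf0 : ∀ x ∈ s, 0 < f x) (hg0 : ∀ x ∈ s, 0 < g x) :
    StrictAntiOn (fun x => f x / g x) s := by
  intro x hx y hy hxy
  calc f y / g y < f y / g x := div_lt_div_of_pos_left (hf0 y hy) (hg0 x hx) (hg hx hy hxy)
    _ ≤ f x / g x := div_le_div_of_nonneg_right (hf hx hy hxy.le) (hg0 x hx).le

theorem existsUnique_mem_Icc_eq_of_strictAntiOn {f : ℝ → ℝ} {a b y : ℝ} (hab : a ≤ b)
    (hcont : ContinuousOn f (Set.Icc a b)) (hanti : StrictAntiOn f (Set.Icc a b))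
    (hy : y ∈ Set.Icc (f b) (f a)) : ∃! x, x ∈ Set.Icc a b ∧ f x = y := by
  obtain ⟨x, hx, hfx⟩ := intermediate_value_Icc' hab hcont hy
  exact ⟨x, ⟨hx, hfx⟩, fun x' ⟨hx', hfx'⟩ => hanti.injOn hx' hx (hfx'.trans hfx.symm)⟩

section Cost

variable (c π : ℕ → ℝ) (K : ℕ)

noncomputable def qFun (k : ℕ) (x : ℝ) : ℝ :=
  (∑ t ∈ Icc 1 k, π t * c t) + ∑ t ∈ Icc (k + 1) K, π t * Real.sqrt (c t * c k / x)

noncomputable def rFun (k : ℕ) (x : ℝ) : ℝ :=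
  2 * ((∑ t ∈ Icc 1 k, π t * c t * x / c k) + ∑ t ∈ Icc (k + 1) K, π t)

noncomputable def bFun (k : ℕ) (x : ℝ) : ℝ := qFun c π K k x / rFun c π K k x

variable {c π K} {k : ℕ}

theorem rFun_eq_mul_add (k : ℕ) (x : ℝ) :
    rFun c π K k x = 2 * ((∑ t ∈ Icc 1 k, π t * c t) / c k * x + ∑ t ∈ Icc (k + 1) K, π t) := by
  simp only [rFun, sum_div, sum_mul]
  congr 2
  exact sum_congr rfl fun t _ => by ring

theorem qFun_succ_one (hkK : k < K) (hck : c k ≠ 0) (hck1 : 0 ≤ c (k + 1)) :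
    qFun c π K (k + 1) 1 = qFun c π K k (c k / c (k + 1)) := by
  have hsqrt : ∀ t, c t * c k / (c k / c (k + 1)) = c t * c (k + 1) := fun t => by
    field_simp
  simp only [qFun, hsqrt, div_one, sum_Icc_succ_top (by omega : 1 ≤ k + 1),
    ← insert_Icc_add_one_left_eq_Icc (by omega : k + 1 ≤ K)]
  rw [sum_insert (by simp), Real.sqrt_mul_self hck1]
  ring

theorem rFun_succ_one (hkK : k < K) (hck : c k ≠ 0) (hck1 : c (k + 1) ≠ 0) :
    rFun c π K (k + 1) 1 = rFun c π K k (c k / c (k + 1)) := by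
  simp only [rFun_eq_mul_add, sum_Icc_succ_top (by omega : 1 ≤ k + 1),
    ← insert_Icc_add_one_left_eq_Icc (by omega : k + 1 ≤ K)]
  rw [sum_insert (by simp)]
  field_simp
  ring

theorem sum_mul_pos_of_mem_Icc (hc : ∀ t ∈ Icc 1 K, 0 < c t) (hπ : ∀ t ∈ Icc 1 K, 0 < π t)
    (hk : k ∈ Icc 1 K) : 0 < ∑ t ∈ Icc 1 k, π t * c t := by
  obtain ⟨hk1, hkK⟩ := mem_Icc.mp hk
  refine sum_pos (fun t ht => ?_) (nonempty_Icc.mpr hk1)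
  have htK : t ∈ Icc 1 K := Icc_subset_Icc le_rfl hkK ht
  exact mul_pos (hπ t htK) (hc t htK)

theorem qFun_pos (hc : ∀ t ∈ Icc 1 K, 0 < c t) (hπ : ∀ t ∈ Icc 1 K, 0 < π t)
    (hk : k ∈ Icc 1 K) (x : ℝ) : 0 < qFun c π K k x :=
  add_pos_of_pos_of_nonneg (sum_mul_pos_of_mem_Icc hc hπ hk) <| sum_nonneg fun t ht =>
    mul_nonneg (hπ t (Icc_add_one_subset_Icc_one k K ht)).le (Real.sqrt_nonneg _)

theorem qFun_antitoneOn (hc : ∀ t ∈ Icc 1 K, 0 < c t) (hπ : ∀ t ∈ Icc 1 K, 0 < π t)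
    (hk : k ∈ Icc 1 K) : AntitoneOn (qFun c π K k) (Set.Ioi 0) := by
  intro x hx y _ hxy
  unfold qFun
  gcongr with t ht
  · exact (hπ t (Icc_add_one_subset_Icc_one k K ht)).le
  · exact (mul_pos (hc t (Icc_add_one_subset_Icc_one k K ht)) (hc k hk)).le

theorem rFun_strictMono (hc : ∀ t ∈ Icc 1 K, 0 < c t) (hπ : ∀ t ∈ Icc 1 K, 0 < π t)
    (hk : k ∈ Icc 1 K) : StrictMono (rFun c π K k) := by
  intro x y hxy
  have hslope : 0 < (∑ t ∈ Icc 1 k, π t * c t) / c k :=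
    div_pos (sum_mul_pos_of_mem_Icc hc hπ hk) (hc k hk)
  simp only [rFun_eq_mul_add]
  gcongr

theorem rFun_pos (hc : ∀ t ∈ Icc 1 K, 0 < c t) (hπ : ∀ t ∈ Icc 1 K, 0 < π t)
    (hk : k ∈ Icc 1 K) {x : ℝ} (hx : 0 < x) : 0 < rFun c π K k x := by
  have hslope : 0 < (∑ t ∈ Icc 1 k, π t * c t) / c k :=
    div_pos (sum_mul_pos_of_mem_Icc hc hπ hk) (hc k hk)
  have htail : 0 ≤ ∑ t ∈ Icc (k + 1) K, π t :=
    sum_nonneg fun t ht => (hπ t (Icc_add_one_subset_Icc_one k K ht)).le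
  rw [rFun_eq_mul_add]
  positivity

theorem bFun_strictAntiOn (hc : ∀ t ∈ Icc 1 K, 0 < c t) (hπ : ∀ t ∈ Icc 1 K, 0 < π t)
    (hk : k ∈ Icc 1 K) : StrictAntiOn (bFun c π K k) (Set.Ioi 0) :=
  (qFun_antitoneOn hc hπ hk).div_strictMonoOn ((rFun_strictMono hc hπ hk).strictMonoOn _)
    (fun x _ => qFun_pos hc hπ hk x) fun _ hx => rFun_pos hc hπ hk hx

theorem bFun_continuousOn (hc : ∀ t ∈ Icc 1 K, 0 < c t) (hπ : ∀ t ∈ Icc 1 K, 0 < π t)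
    (hk : k ∈ Icc 1 K) : ContinuousOn (bFun c π K k) (Set.Ioi 0) := by
  have hq : ContinuousOn (qFun c π K k) (Set.Ioi 0) := by
    unfold qFun
    fun_prop (disch := exact fun x hx => ne_of_gt hx)
  have hr : Continuous (rFun c π K k) := by
    unfold rFun
    fun_prop
  exact hq.div hr.continuousOn fun _ hx => (rFun_pos hc hπ hk hx).ne'

theorem bFun_succ_one (hc : ∀ t ∈ Icc 1 K, 0 < c t) (hk : k ∈ Icc 1 (K - 1)) :
    bFun c π K (k + 1) 1 = bFun c π K k (c k / c (k + 1)) := by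
  obtain ⟨hk1, hkK⟩ := mem_Icc.mp hk
  have hck := hc k (mem_Icc.mpr ⟨hk1, by omega⟩)
  have hck1 := hc (k + 1) (mem_Icc.mpr ⟨by omega, by omega⟩)
  rw [bFun, bFun, qFun_succ_one (by omega) hck.ne' hck1.le,
    rFun_succ_one (by omega) hck.ne' hck1.ne']

end Cost

theorem unique_xstar_general
    (K : ℕ) (c π : ℕ → ℝ) (Q R B : ℕ → ℝ → ℝ) (Bbar : ℝ)
    (hc : ∀ t ∈ Finset.Icc 1 K, 0 < c t)
    (hcmono : ∀ j ∈ Finset.Icc 1 (K - 1), c j < c (j + 1))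
    (hπpos : ∀ t ∈ Finset.Icc 1 K, 0 < π t)
    (hQ : ∀ k ∈ Finset.Icc 1 K, ∀ x ∈ Set.Ioc (0 : ℝ) 1,
      Q k x = (∑ t ∈ Finset.Icc 1 k, π t * c t)
        + ∑ t ∈ Finset.Icc (k + 1) K, π t * Real.sqrt (c t * c k / x))
    (hR : ∀ k ∈ Finset.Icc 1 K, ∀ x ∈ Set.Ioc (0 : ℝ) 1,
      R k x = 2 * ((∑ t ∈ Finset.Icc 1 k, π t * c t * x / c k)
        + ∑ t ∈ Finset.Icc (k + 1) K, π t))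
    (hB : ∀ k ∈ Finset.Icc 1 K, ∀ x ∈ Set.Ioc (0 : ℝ) 1,
      B k x = Q k x / R k x)
    (kstar : ℕ) (hkstar : kstar ∈ Finset.Icc 1 (K - 1))
    (hkstar_lb : B kstar 1 ≤ Bbar) (hkstar_ub : Bbar < B (kstar + 1) 1) :
    ∃! xstar : ℝ, xstar ∈ Set.Icc (c kstar / c (kstar + 1)) 1 ∧ B kstar xstar = Bbar := by
  have hBeq : ∀ k ∈ Icc 1 K, Set.EqOn (B k) (bFun c π K k) (Set.Ioc 0 1) := fun k hk x hx => by
    rw [hB k hk x hx, hQ k hk x hx, hR k hk x hx, bFun, qFun, rFun]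
  obtain ⟨hk1, hkK⟩ := mem_Icc.mp hkstar
  have hk : kstar ∈ Icc 1 K := mem_Icc.mpr ⟨hk1, by omega⟩
  have hk' : kstar + 1 ∈ Icc 1 K := mem_Icc.mpr ⟨by omega, by omega⟩
  have ha0 : 0 < c kstar / c (kstar + 1) := div_pos (hc _ hk) (hc _ hk')
  have ha1 : c kstar / c (kstar + 1) ≤ 1 := (div_le_one (hc _ hk')).mpr (hcmono _ hkstar).le
  have hsub : Set.Icc (c kstar / c (kstar + 1)) 1 ⊆ Set.Ioc 0 1 :=
    fun x hx => ⟨ha0.trans_le hx.1, hx.2⟩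
  have hone : (1 : ℝ) ∈ Set.Ioc 0 1 := ⟨one_pos, le_rfl⟩
  have hBbar : Bbar ∈
      Set.Icc (bFun c π K kstar 1) (bFun c π K kstar (c kstar / c (kstar + 1))) := by
    rw [← bFun_succ_one hc hkstar, ← hBeq _ hk hone, ← hBeq _ hk' hone]
    exact ⟨hkstar_lb, hkstar_ub.le⟩
  have hIoi : Set.Icc (c kstar / c (kstar + 1)) 1 ⊆ Set.Ioi 0 := fun x hx => (hsub hx).1
  obtain ⟨x, hx, huniq⟩ := existsUnique_mem_Icc_eq_of_strictAntiOn ha1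
    ((bFun_continuousOn hc hπpos hk).mono hIoi) ((bFun_strictAntiOn hc hπpos hk).mono hIoi) hBbar
  exact ⟨x, ⟨hx.1, (hBeq _ hk (hsub hx.1)).trans hx.2⟩,
    fun y hy => huniq y ⟨hy.1, (hBeq _ hk (hsub hy.1)).symm.trans hy.2⟩⟩

/-- if `B(1,1) ≤ B̄ < B(K,1)` and `k* ∈ {1,…,K−1}` satisfies
`B(k*,1) ≤ B̄ < B(k*+1,1)`, then there is a unique `x* ∈ [c_{k*}/c_{k*+1}, 1]` with
`B(k*, x*) = B̄`. Costs are indexed by `{1, …, K}`. -/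
theorem unique_xstar
    (K : ℕ) (hK : 2 ≤ K) (c π : ℕ → ℝ) (Q R B : ℕ → ℝ → ℝ) (Bbar : ℝ)
    (hc : ∀ t ∈ Finset.Icc 1 K, 0 < c t)
    (hcmono : ∀ j ∈ Finset.Icc 1 (K - 1), c j < c (j + 1))
    (hπpos : ∀ t ∈ Finset.Icc 1 K, 0 < π t)
    (hπsum : ∑ t ∈ Finset.Icc 1 K, π t = 1)
    (hQ : ∀ k ∈ Finset.Icc 1 K, ∀ x ∈ Set.Ioc (0 : ℝ) 1,
      Q k x = (∑ t ∈ Finset.Icc 1 k, π t * c t)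
        + ∑ t ∈ Finset.Icc (k + 1) K, π t * Real.sqrt (c t * c k / x))
    (hR : ∀ k ∈ Finset.Icc 1 K, ∀ x ∈ Set.Ioc (0 : ℝ) 1,
      R k x = 2 * ((∑ t ∈ Finset.Icc 1 k, π t * c t * x / c k)
        + ∑ t ∈ Finset.Icc (k + 1) K, π t))
    (hB : ∀ k ∈ Finset.Icc 1 K, ∀ x ∈ Set.Ioc (0 : ℝ) 1,
      B k x = Q k x / R k x)
    (hBbar_lb : B 1 1 ≤ Bbar) (hBbar_ub : Bbar < B K 1)
    (kstar : ℕ) (hkstar : kstar ∈ Finset.Icc 1 (K - 1))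
    (hkstar_lb : B kstar 1 ≤ Bbar) (hkstar_ub : Bbar < B (kstar + 1) 1) :
    ∃! xstar : ℝ, xstar ∈ Set.Icc (c kstar / c (kstar + 1)) 1 ∧ B kstar xstar = Bbar :=
  unique_xstar_general K c π Q R B Bbar hc hcmono hπpos hQ hR hB kstar hkstar hkstar_lb hkstar_ub
end

section
/- Suppose B(1,1) ≤ B̄ < Σ_{t=1}^K π_t·c_t, let k* ∈ {1,…,K−1} satisfy B(k*,1) ≤ B̄ < B(k*+1,1), let x* ∈ [c_{k*}/c_{k*+1}, 1] satisfy B(k*, x*) = B̄, and assume R(k*, x*) < 1. Let t* = max{k ∈ {1,…,K} : B̄ > Q(k,1)}, and let k̃ ∈ {1,…,k*} and x̃ ∈ [c_{k̃}/c_{k̃+1}, 1] satisfy R(k̃, x̃) = 1. Define q ∈ [0,1]^K by q_t = (c_t/c_{k̃})·x̃ for t ≤ k̃ and q_t = 1 for t > k̃, and define A by A_t = 1 for t ≤ t* and A_t = (1/√c_t)·(B̄ − Σ_{s=1}^{t*} π_s·c_s)/(Σ_{s=t*+1}^K π_s·√c_s) for t > t*. Then t* is well defined with k̃ ≤ t*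 < K, A is a monotone non-increasing budget-feasible allocation rule with Σ_{t=1}^K π_t·c_t·A_t = B̄, and (A, q) is an equilibrium pair. -/
open scoped Classical

/-!
Let `D = (B̄ - Σ_{s ≤ t*} π_s c_s) / Σ_{s > t*} π_s √c_s`. The designer's problem is relaxed with
the Lagrange multiplier `1 / D²`: for fixed `t`, the cost `q_t / a + c_t a / D²` over `a ∈ (0, 1]`
is minimised at `a = 1` when `c_t ≤ D² q_t`, and, by AM-GM, at `a = D / √c_t` when `q_t = 1`.
Maximality of `t*` gives `√c_{t*} < D ≤ √c_{t*+1}`, so `A` is this minimiser, lies in `(0, 1]`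
and spends exactly `B̄`. For `t ≤ k̃` the condition `c_t ≤ D² q_t` reduces to
`c_{k̃} ≤ x̃ D²`: if `k̃ < t*` it follows from `x̃ ≥ c_{k̃} / c_{k̃+1}`, and if `k̃ = t* = k*` from
`x* < x̃` (as `R(k*, ·)` is increasing) and `Q(k*, x̃) ≤ Q(k*, x*) < B̄`.

On the adversary's side, `R(k̃, x̃) = 1` says `Σ_t π_t q_t = 1/2`, and every type with `q_t < 1`
has `A_t = 1`; hence `V(A, q') ≤ V(A, q) - (Σ_t π_t q'_t - 1/2)²`.
-/

section

open Finset

lemma add_le_div_add_mul_of_le_one {q μ a : ℝ} (hμ : 0 ≤ μ) (hμq : μ ≤ q) (ha : 0 < a)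
    (ha1 : a ≤ 1) : q + μ ≤ q / a + μ * a := by
  have hqa : q ≤ q / a := le_div_self (hμ.trans hμq) ha ha1
  have hcancel : q / a * a = q := div_mul_cancel₀ q ha.ne'
  nlinarith [mul_nonneg (sub_nonneg.2 ha1) (sub_nonneg.2 (hμq.trans hqa))]

lemma two_mul_div_le_inv_add (s : ℝ) {D a : ℝ} (hD : 0 < D) (ha : 0 < a) :
    2 * s / D ≤ 1 / a + s ^ 2 * a / D ^ 2 := by
  rw [div_add_div _ _ ha.ne' (by positivity), div_le_div_iff₀ hD (by positivity)]
  nlinarith [mul_nonneg hD.le (sq_nonneg (D - s * a))]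

/-- Weak Lagrangian duality. -/
lemma sum_le_sum_of_add_mul_le {ι : Type*} {s : Finset ι} {f g x y : ι → ℝ} {μ : ℝ}
    (hμ : 0 ≤ μ) (h : ∀ i ∈ s, f i + μ * x i ≤ g i + μ * y i)
    (hyx : ∑ i ∈ s, y i ≤ ∑ i ∈ s, x i) : ∑ i ∈ s, f i ≤ ∑ i ∈ s, g i := by
  have hsum := sum_le_sum h
  rw [sum_add_distrib, sum_add_distrib, ← mul_sum, ← mul_sum] at hsum
  nlinarith [mul_le_mul_of_nonneg_left hyx hμ]

lemma sum_mul_div_sub_sq_le {ι : Type*} {s : Finset ι} {w q q' A : ι → ℝ}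
    (hw : ∀ i ∈ s, 0 ≤ w i) (hA : ∀ i ∈ s, 0 < A i ∧ A i ≤ 1) (hq' : ∀ i ∈ s, q' i ≤ 1)
    (hq : ∀ i ∈ s, q i = 1 ∨ A i = 1) (hmean : ∑ i ∈ s, w i * q i = 1 / 2) :
    ∑ i ∈ s, w i * q' i / A i - (∑ i ∈ s, w i * q' i) ^ 2
      ≤ ∑ i ∈ s, w i * q i / A i - (∑ i ∈ s, w i * q i) ^ 2 := by
  have hpt : ∀ i ∈ s, w i * q' i / A i ≤ w i * q i / A i + (w i * q' i - w i * q i) := by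
    intro i hi
    obtain ⟨hA0, hA1⟩ := hA i hi
    rcases hq i hi with h | h
    · have hneg : w i * (q' i - 1) ≤ 0 :=
        mul_nonpos_of_nonneg_of_nonpos (hw i hi) (by linarith [hq' i hi])
      have hdiv : w i * (q' i - 1) / A i ≤ w i * (q' i - 1) := by
        rw [div_le_iff₀ hA0]
        nlinarith
      rw [h]
      linarith [show w i * (q' i - 1) / A i = w i * q' i / A i - w i * 1 / A i by ring]
    · simp [h]
  have hsum := sum_le_sum hpt
  rw [sum_add_distrib, sum_sub_distrib, hmean] at hsum
  rw [hmean]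
  nlinarith [sq_nonneg (∑ i ∈ s, w i * q' i - 1 / 2)]

lemma findGreatest_crossing {P : ℕ → Prop} [DecidablePred P] {k n : ℕ} (hk : k ≤ n) (hPk : P k)
    (hPn : ¬P n) :
    k ≤ Nat.findGreatest P n ∧ Nat.findGreatest P n < n ∧ P (Nat.findGreatest P n) ∧
      ¬P (Nat.findGreatest P n + 1) := by
  have hspec := Nat.findGreatest_spec hk hPk
  have hlt : Nat.findGreatest P n < n :=
    (Nat.findGreatest_le n).lt_of_ne fun h => hPn (h ▸ hspec)
  exact ⟨Nat.le_findGreatest hk hPk, hlt, hspec, Nat.findGreatest_is_greatest (by omega) hlt⟩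

lemma sum_Icc_one_eq_add {M : Type*} [AddCommMonoid M] (f : ℕ → M) {m n : ℕ} (h : m ≤ n) :
    ∑ t ∈ Icc 1 n, f t = ∑ t ∈ Icc 1 m, f t + ∑ t ∈ Icc (m + 1) n, f t := by
  have h := sum_Ioc_consecutive f (Nat.zero_le m) h
  rw [← Icc_add_one_left_eq_Ioc, ← Icc_add_one_left_eq_Ioc, ← Icc_add_one_left_eq_Ioc,
    zero_add] at h
  exact h.symm

lemma sum_Icc_pos_of_pos {K a b : ℕ} {f : ℕ → ℝ} (hf : ∀ t ∈ Icc 1 K, 0 < f t) (ha : 1 ≤ a)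
    (hab : a ≤ b) (hb : b ≤ K) : 0 < ∑ t ∈ Icc a b, f t :=
  sum_pos (fun t ht => hf t (by simp at ht ⊢; omega)) (nonempty_Icc.2 hab)

variable {K : ℕ} {c π : ℕ → ℝ}

lemma monotoneOn_Icc_of_lt_succ (h : ∀ j ∈ Icc 1 (K - 1), c j < c (j + 1)) :
    MonotoneOn c (Set.Icc 1 K) :=
  monotoneOn_of_le_add_one Set.ordConnected_Icc fun j _ hj hj1 =>
    (h j (mem_Icc.2 ⟨hj.1, by have := hj1.2; omega⟩)).le

lemma mem_Ioc_of_div_succ_le (hc : ∀ t ∈ Icc 1 K, 0 < c t) {k : ℕ} (hk1 : 1 ≤ k)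
    (hk : k + 1 ≤ K) {x : ℝ} (hx : c k / c (k + 1) ≤ x) (hx1 : x ≤ 1) : x ∈ Set.Ioc (0 : ℝ) 1 :=
  ⟨(div_pos (hc k (by simp; omega)) (hc (k + 1) (by simp; omega))).trans_le hx, hx1⟩

lemma le_mul_sq_of_div_succ_le (hc : ∀ t ∈ Icc 1 K, 0 < c t)
    (hmono : MonotoneOn c (Set.Icc 1 K)) {k m : ℕ} (hk1 : 1 ≤ k) (hkm : k < m) (hm : m ≤ K)
    {y D : ℝ} (hy : c k / c (k + 1) ≤ y) (hcm : c m < D ^ 2) : c k ≤ y * D ^ 2 := by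
  have hck := hc (k + 1) (by simp; omega)
  have hnext : c k ≤ y * c (k + 1) := (div_le_iff₀ hck).1 hy
  have hy0 : 0 ≤ y := (div_pos (hc k (by simp; omega)) hck).le.trans hy
  have := hmono (a := k + 1) ⟨by omega, by omega⟩ ⟨by omega, hm⟩ hkm
  nlinarith

variable (K c π) in
noncomputable def Qform (k : ℕ) (x : ℝ) : ℝ :=
  ∑ t ∈ Icc 1 k, π t * c t + ∑ t ∈ Icc (k + 1) K, π t * √(c t * c k / x)

variable (K c π) in
noncomputable def Rform (k : ℕ) (x : ℝ) : ℝ :=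
  2 * (∑ t ∈ Icc 1 k, π t * c t * x / c k + ∑ t ∈ Icc (k + 1) K, π t)

variable (K c π) in
/-- The level `D` for which the allocation rule `A_t = 1` (`t ≤ m`), `A_t = D / √c_t` (`t > m`)
spends exactly `b`. -/
noncomputable def thresholdLevel (m : ℕ) (b : ℝ) : ℝ :=
  (b - ∑ t ∈ Icc 1 m, π t * c t) / ∑ t ∈ Icc (m + 1) K, π t * √(c t)

lemma Qform_self (x : ℝ) : Qform K c π K x = ∑ t ∈ Icc 1 K, π t * c t := by
  rw [Qform, Icc_eq_empty_of_lt (Nat.lt_succ_self K), sum_empty, add_zero]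

lemma sum_Icc_succ_mul_sqrt_nonneg (hπ : ∀ t ∈ Icc 1 K, 0 < π t) (k : ℕ) :
    0 ≤ ∑ t ∈ Icc (k + 1) K, π t * √(c t) :=
  sum_nonneg fun t ht => mul_nonneg (hπ t (by simp at ht ⊢; omega)).le (Real.sqrt_nonneg _)

section Qform

variable (hc : ∀ t ∈ Icc 1 K, 0 < c t) (hπ : ∀ t ∈ Icc 1 K, 0 < π t)
include hc

lemma Qform_eq_add_sqrt_mul (k : ℕ) (x : ℝ) :
    Qform K c π k x
      = ∑ t ∈ Icc 1 k, π t * c t + √(c k / x) * ∑ t ∈ Icc (k + 1) K, π t * √(c t) := by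
  rw [Qform, mul_sum]
  congr 1
  refine sum_congr rfl fun t ht => ?_
  rw [mul_div_assoc, Real.sqrt_mul (hc t (by simp at ht ⊢; omega)).le]
  ring

lemma Qform_succ_one {k : ℕ} (hk : k < K) :
    Qform K c π (k + 1) 1
      = ∑ t ∈ Icc 1 k, π t * c t + √(c (k + 1)) * ∑ t ∈ Icc (k + 1) K, π t * √(c t) := by
  rw [Qform_eq_add_sqrt_mul hc, div_one, sum_Icc_succ_top (by omega),
    Icc_eq_cons_Ioc (by omega : k + 1 ≤ K), sum_cons, ← Icc_add_one_left_eq_Ioc]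
  linear_combination (-π (k + 1)) * Real.mul_self_sqrt (hc (k + 1) (by simp; omega)).le

include hπ

lemma Qform_pos {k : ℕ} (hk : k ∈ Icc 1 K) (x : ℝ) : 0 < Qform K c π k x := by
  have hhead := sum_Icc_pos_of_pos (fun t ht => mul_pos (hπ t ht) (hc t ht)) le_rfl
    (mem_Icc.1 hk).1 (mem_Icc.1 hk).2
  have htail := sum_Icc_succ_mul_sqrt_nonneg (c := c) hπ k
  rw [Qform_eq_add_sqrt_mul hc]
  positivity

lemma Qform_antitoneOn {k : ℕ} (hk : k ∈ Icc 1 K) : AntitoneOn (Qform K c π k) (Set.Ioi 0) := by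
  intro x hx y _ hxy
  have htail := sum_Icc_succ_mul_sqrt_nonneg (c := c) hπ k
  have hck := (hc k hk).le
  rw [Qform_eq_add_sqrt_mul hc, Qform_eq_add_sqrt_mul hc]
  gcongr

lemma sum_Icc_succ_mul_sqrt_pos {m : ℕ} (hm : m < K) :
    0 < ∑ t ∈ Icc (m + 1) K, π t * √(c t) :=
  sum_Icc_pos_of_pos (fun t ht => mul_pos (hπ t ht) (Real.sqrt_pos.2 (hc t ht)))
    (Nat.le_add_left 1 m) hm le_rfl

lemma sum_add_thresholdLevel_mul {m : ℕ} (hm : m < K) (b : ℝ) :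
    ∑ t ∈ Icc 1 m, π t * c t + thresholdLevel K c π m b * ∑ t ∈ Icc (m + 1) K, π t * √(c t)
      = b := by
  rw [thresholdLevel, div_mul_cancel₀ _ (sum_Icc_succ_mul_sqrt_pos hc hπ hm).ne']
  ring

lemma sqrt_div_lt_thresholdLevel {m : ℕ} (hm : m < K) {x b : ℝ} (h : Qform K c π m x < b) :
    √(c m / x) < thresholdLevel K c π m b := by
  rw [Qform_eq_add_sqrt_mul hc] at h
  rw [thresholdLevel, lt_div_iff₀ (sum_Icc_succ_mul_sqrt_pos hc hπ hm)]
  linarith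

lemma thresholdLevel_le_sqrt_succ {m : ℕ} (hm : m < K) {b : ℝ}
    (h : b ≤ Qform K c π (m + 1) 1) : thresholdLevel K c π m b ≤ √(c (m + 1)) := by
  rw [Qform_succ_one hc hm] at h
  rw [thresholdLevel, div_le_iff₀ (sum_Icc_succ_mul_sqrt_pos hc hπ hm)]
  linarith

lemma Rform_pos {k : ℕ} (hk : k < K) {x : ℝ} (hx : 0 ≤ x) : 0 < Rform K c π k x := by
  have hhead : 0 ≤ ∑ t ∈ Icc 1 k, π t * c t * x / c k := sum_nonneg fun t ht => by
    have := hπ t (by simp at ht ⊢; omega)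
    have := hc t (by simp at ht ⊢; omega)
    have := hc k (by simp at ht ⊢; omega)
    positivity
  have htail := sum_Icc_pos_of_pos hπ (a := k + 1) (by omega) hk le_rfl
  rw [Rform]
  positivity

lemma Rform_strictMono {k : ℕ} (hk : k ∈ Icc 1 K) : StrictMono (Rform K c π k) := by
  intro x y hxy
  have hck := hc k hk
  have hhead := sum_Icc_pos_of_pos (fun t ht => mul_pos (hπ t ht) (hc t ht)) le_rfl
    (mem_Icc.1 hk).1 (mem_Icc.1 hk).2
  have e : ∀ z, ∑ t ∈ Icc 1 k, π t * c t * z / c k = z / c k * ∑ t ∈ Icc 1 k, π t * c t :=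
    fun z => by rw [mul_sum]; exact sum_congr rfl fun t _ => by ring
  simp only [Rform, e]
  gcongr

lemma lt_mul_sq_thresholdLevel_of_Rform_lt {m : ℕ} (hm1 : 1 ≤ m) (hm : m < K) {x y b : ℝ}
    (hx : 0 < x) (hR : Rform K c π m x < Rform K c π m y) (hQ : Qform K c π m x < b) :
    c m < y * thresholdLevel K c π m b ^ 2 := by
  have hmK : m ∈ Icc 1 K := by simp; omega
  have hxy := (Rform_strictMono hc hπ hmK).lt_iff_lt.1 hR
  have h := sqrt_div_lt_thresholdLevel hc hπ hm
    ((Qform_antitoneOn hc hπ hmK hx (hx.trans hxy) hxy.le).trans_lt hQ)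
  rw [Real.sqrt_lt' ((Real.sqrt_nonneg _).trans_lt h), div_lt_iff₀ (hx.trans hxy)] at h
  linarith

lemma findGreatest_Qform_lt_spec {P : ℕ → Prop} [DecidablePred P] {b : ℝ}
    (hP : ∀ j ≤ K, P j ↔ 1 ≤ j ∧ Qform K c π j 1 < b) {k : ℕ} (hk1 : 1 ≤ k) (hk : k ≤ K)
    (hQk : Qform K c π k 1 < b) (hb : b < ∑ t ∈ Icc 1 K, π t * c t) :
    k ≤ Nat.findGreatest P K ∧ Nat.findGreatest P K < K ∧ P (Nat.findGreatest P K) ∧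
      √(c (Nat.findGreatest P K)) < thresholdLevel K c π (Nat.findGreatest P K) b ∧
      thresholdLevel K c π (Nat.findGreatest P K) b ≤ √(c (Nat.findGreatest P K + 1)) := by
  obtain ⟨hkm, hmK, hPm, hPm1⟩ := findGreatest_crossing hk ((hP k hk).2 ⟨hk1, hQk⟩)
    fun h => hb.not_gt (Qform_self (c := c) (π := π) 1 ▸ ((hP K le_rfl).1 h).2)
  refine ⟨hkm, hmK, hPm, ?_, thresholdLevel_le_sqrt_succ hc hπ hmK
    (not_lt.1 fun h => hPm1 ((hP _ hmK).2 ⟨by omega, h⟩))⟩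
  simpa using sqrt_div_lt_thresholdLevel hc hπ hmK ((hP _ hmK.le).1 hPm).2

end Qform

section ThresholdAllocation

variable {m : ℕ} {D : ℝ} {A : ℕ → ℝ}
  (hA_low : ∀ t, t ≤ m → A t = 1) (hA_high : ∀ t, m < t → A t = 1 / √(c t) * D)
include hA_low hA_high

lemma threshold_alloc_mem_Ioc (hc : ∀ t ∈ Icc 1 K, 0 < c t) (hmono : MonotoneOn c (Set.Icc 1 K))
    (hD : 0 < D) (hDle : D ≤ √(c (m + 1))) : ∀ t ∈ Icc 1 K, 0 < A t ∧ A t ≤ 1 := by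
  intro t ht
  rcases le_or_gt t m with h | h
  · simp [hA_low t h]
  have hct := Real.sqrt_pos.2 (hc t ht)
  have hle : √(c (m + 1)) ≤ √(c t) :=
    Real.sqrt_le_sqrt (hmono ⟨by omega, by simp at ht; omega⟩ (mem_Icc.1 ht) h)
  rw [hA_high t h, one_div, inv_mul_le_iff₀ hct, mul_one]
  exact ⟨by positivity, hDle.trans hle⟩

lemma threshold_alloc_antitone (hc : ∀ t ∈ Icc 1 K, 0 < c t)
    (hmono : MonotoneOn c (Set.Icc 1 K)) (hD : 0 < D) (hDle : D ≤ √(c (m + 1))) :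
    ∀ s ∈ Icc 1 K, ∀ t ∈ Icc 1 K, s ≤ t → A t ≤ A s := by
  intro s hs t ht hst
  rcases le_or_gt t m with htm | htm
  · rw [hA_low t htm, hA_low s (hst.trans htm)]
  rcases le_or_gt s m with hsm | hsm
  · rw [hA_low s hsm]
    exact (threshold_alloc_mem_Ioc hA_low hA_high hc hmono hD hDle t ht).2
  rw [hA_high t htm, hA_high s hsm]
  gcongr
  · exact Real.sqrt_pos.2 (hc s hs)
  · exact hmono (mem_Icc.1 hs) (mem_Icc.1 ht) hst

lemma sum_mul_threshold_alloc (hm : m ≤ K) :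
    ∑ t ∈ Icc 1 K, π t * c t * A t
      = ∑ t ∈ Icc 1 m, π t * c t + D * ∑ t ∈ Icc (m + 1) K, π t * √(c t) := by
  rw [sum_Icc_one_eq_add _ hm, mul_sum]
  congr 1
  · exact sum_congr rfl fun t ht => by rw [hA_low t (mem_Icc.1 ht).2, mul_one]
  · refine sum_congr rfl fun t ht => ?_
    rw [hA_high t (by simp at ht; omega)]
    calc π t * c t * (1 / √(c t) * D) = D * (π t * (c t / √(c t))) := by ring
      _ = D * (π t * √(c t)) := by rw [Real.div_sqrt]

lemma sum_div_threshold_alloc_le (hπ : ∀ t ∈ Icc 1 K, 0 ≤ π t) (hc : ∀ t ∈ Icc 1 K, 0 < c t)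
    (hD : 0 < D) {q : ℕ → ℝ} (hq_low : ∀ t ∈ Icc 1 K, t ≤ m → c t ≤ D ^ 2 * q t)
    (hq_high : ∀ t, m < t → q t = 1) {A' : ℕ → ℝ} (hA' : ∀ t ∈ Icc 1 K, 0 < A' t ∧ A' t ≤ 1)
    (hspend : ∑ t ∈ Icc 1 K, π t * c t * A' t ≤ ∑ t ∈ Icc 1 K, π t * c t * A t) :
    ∑ t ∈ Icc 1 K, π t * q t / A t ≤ ∑ t ∈ Icc 1 K, π t * q t / A' t := by
  refine sum_le_sum_of_add_mul_le (μ := 1 / D ^ 2) (by positivity) (fun t ht => ?_) hspend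
  obtain ⟨ha0, ha1⟩ := hA' t ht
  have hct := hc t ht
  suffices q t / A t + c t / D ^ 2 * A t ≤ q t / A' t + c t / D ^ 2 * A' t by
    calc π t * q t / A t + 1 / D ^ 2 * (π t * c t * A t)
        = π t * (q t / A t + c t / D ^ 2 * A t) := by ring
      _ ≤ π t * (q t / A' t + c t / D ^ 2 * A' t) := mul_le_mul_of_nonneg_left this (hπ t ht)
      _ = π t * q t / A' t + 1 / D ^ 2 * (π t * c t * A' t) := by ring
  rcases le_or_gt t m with h | h
  · rw [hA_low t h, div_one, mul_one]
    refine add_le_div_add_mul_of_le_one (by positivity) ?_ ha0 ha1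
    rw [div_le_iff₀ (by positivity)]
    linarith [hq_low t ht h]
  · have hs := Real.sqrt_pos.2 hct
    have hsq := Real.sq_sqrt hct.le
    rw [hA_high t h, hq_high t h]
    calc 1 / (1 / √(c t) * D) + c t / D ^ 2 * (1 / √(c t) * D) = 2 * √(c t) / D := by
          field_simp
          rw [hsq]
          ring
      _ ≤ 1 / A' t + √(c t) ^ 2 * A' t / D ^ 2 := two_mul_div_le_inv_add _ hD ha0
      _ = 1 / A' t + c t / D ^ 2 * A' t := by rw [hsq]; ring

end ThresholdAllocation

section AdversaryResponse

variable {k : ℕ} {x : ℝ} {q : ℕ → ℝ}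
  (hq_low : ∀ t, t ≤ k → q t = c t / c k * x) (hq_high : ∀ t, k < t → q t = 1)
include hq_low hq_high

lemma adversary_mem_Icc (hc : ∀ t ∈ Icc 1 K, 0 < c t) (hmono : MonotoneOn c (Set.Icc 1 K))
    (hk : k ≤ K) (hx : x ∈ Set.Icc (0 : ℝ) 1) : ∀ t ∈ Icc 1 K, q t ∈ Set.Icc (0 : ℝ) 1 := by
  intro t ht
  rcases le_or_gt t k with h | h
  · have hck := hc k (mem_Icc.2 ⟨(mem_Icc.1 ht).1.trans h, hk⟩)
    have hct := hc t ht
    rw [hq_low t h]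
    refine ⟨by have := hx.1; positivity, mul_le_one₀ ?_ hx.1 hx.2⟩
    exact (div_le_one hck).2 (hmono (mem_Icc.1 ht) ⟨(mem_Icc.1 ht).1.trans h, hk⟩ h)
  · simp [hq_high t h]

lemma two_mul_sum_mul_adversary (hk : k ≤ K) :
    2 * ∑ t ∈ Icc 1 K, π t * q t = Rform K c π k x := by
  rw [Rform, sum_Icc_one_eq_add _ hk]
  congr 2
  · exact sum_congr rfl fun t ht => by rw [hq_low t (mem_Icc.1 ht).2]; ring
  · exact sum_congr rfl fun t ht => by rw [hq_high t (by simp at ht; omega), mul_one]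

lemma le_sq_mul_adversary (hc : ∀ t ∈ Icc 1 K, 0 < c t) (hmono : MonotoneOn c (Set.Icc 1 K))
    (hk : k ≤ K) {m : ℕ} (hm : m ≤ K) {D : ℝ} (hcm : c m < D ^ 2) (hck : c k ≤ x * D ^ 2) :
    ∀ t ∈ Icc 1 K, t ≤ m → c t ≤ D ^ 2 * q t := by
  intro t ht htm
  rcases le_or_gt t k with h | h
  · have hck0 := hc k (mem_Icc.2 ⟨(mem_Icc.1 ht).1.trans h, hk⟩)
    rw [hq_low t h, div_mul_eq_mul_div, mul_div_assoc', le_div_iff₀ hck0]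
    nlinarith [mul_le_mul_of_nonneg_left hck (hc t ht).le]
  · rw [hq_high t h, mul_one]
    exact (hmono (mem_Icc.1 ht) ⟨(mem_Icc.1 ht).1.trans htm, hm⟩ htm).trans hcm.le

end AdversaryResponse

end
theorem equilibrium_case_R_lt_one_general
    (K : ℕ) (c π : ℕ → ℝ) (Q R B : ℕ → ℝ → ℝ) (Bbar : ℝ)
    (hc : ∀ t ∈ Finset.Icc 1 K, 0 < c t)
    (hcmono : ∀ j ∈ Finset.Icc 1 (K - 1), c j < c (j + 1))
    (hπpos : ∀ t ∈ Finset.Icc 1 K, 0 < π t)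
    (hQ : ∀ k ∈ Finset.Icc 1 K, ∀ x ∈ Set.Ioc (0 : ℝ) 1,
      Q k x = (∑ t ∈ Finset.Icc 1 k, π t * c t)
        + ∑ t ∈ Finset.Icc (k + 1) K, π t * Real.sqrt (c t * c k / x))
    (hR : ∀ k ∈ Finset.Icc 1 K, ∀ x ∈ Set.Ioc (0 : ℝ) 1,
      R k x = 2 * ((∑ t ∈ Finset.Icc 1 k, π t * c t * x / c k)
        + ∑ t ∈ Finset.Icc (k + 1) K, π t))
    (hB : ∀ k ∈ Finset.Icc 1 K, ∀ x ∈ Set.Ioc (0 : ℝ) 1,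
      B k x = Q k x / R k x)
    (hBbar_ub : Bbar < ∑ t ∈ Finset.Icc 1 K, π t * c t)
    (kstar : ℕ) (hkstar : kstar ∈ Finset.Icc 1 (K - 1))
    (xstar : ℝ) (hxstar_lb : c kstar / c (kstar + 1) ≤ xstar) (hxstar_ub : xstar ≤ 1)
    (hxstar_eq : B kstar xstar = Bbar)
    (hRlt : R kstar xstar < 1)
    (tstar : ℕ)
    (htstar : tstar = Nat.findGreatest (fun k => 1 ≤ k ∧ Bbar > Q k 1) K)
    (ktilde : ℕ) (hktilde : ktilde ∈ Finset.Icc 1 kstar)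
    (xtilde : ℝ) (hxtilde_lb : c ktilde / c (ktilde + 1) ≤ xtilde)
    (hxtilde_ub : xtilde ≤ 1) (hxtilde_eq : R ktilde xtilde = 1)
    (q A : ℕ → ℝ)
    (hq_low : ∀ t, t ≤ ktilde → q t = (c t / c ktilde) * xtilde)
    (hq_high : ∀ t, ktilde < t → q t = 1)
    (hA_low : ∀ t, t ≤ tstar → A t = 1)
    (hA_high : ∀ t, tstar < t →
      A t = (1 / Real.sqrt (c t)) * ((Bbar - ∑ s ∈ Finset.Icc 1 tstar, π s * c s)
        / ∑ s ∈ Finset.Icc (tstar + 1) K, π s * Real.sqrt (c s))) :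
    (tstar ∈ Finset.Icc 1 K ∧ Bbar > Q tstar 1 ∧
      (∀ k ∈ Finset.Icc 1 K, Bbar > Q k 1 → k ≤ tstar) ∧
      ktilde ≤ tstar ∧ tstar < K) ∧
    (∀ t ∈ Finset.Icc 1 K, 0 < A t ∧ A t ≤ 1) ∧
    (∀ s ∈ Finset.Icc 1 K, ∀ t ∈ Finset.Icc 1 K, s ≤ t → A t ≤ A s) ∧
    (∑ t ∈ Finset.Icc 1 K, π t * c t * A t = Bbar) ∧
    (∀ t ∈ Finset.Icc 1 K, q t ∈ Set.Icc (0 : ℝ) 1) ∧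
    (∀ A' : ℕ → ℝ, (∀ t ∈ Finset.Icc 1 K, 0 < A' t ∧ A' t ≤ 1) →
      (∑ t ∈ Finset.Icc 1 K, π t * c t * A' t ≤ Bbar) →
      (∑ t ∈ Finset.Icc 1 K, π t * q t / A t) - (∑ t ∈ Finset.Icc 1 K, π t * q t) ^ 2
        ≤ (∑ t ∈ Finset.Icc 1 K, π t * q t / A' t)
          - (∑ t ∈ Finset.Icc 1 K, π t * q t) ^ 2) ∧
    (∀ q' : ℕ → ℝ, (∀ t ∈ Finset.Icc 1 K, q' t ∈ Set.Icc (0 : ℝ) 1) →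
      (∑ t ∈ Finset.Icc 1 K, π t * q' t / A t) - (∑ t ∈ Finset.Icc 1 K, π t * q' t) ^ 2
        ≤ (∑ t ∈ Finset.Icc 1 K, π t * q t / A t)
          - (∑ t ∈ Finset.Icc 1 K, π t * q t) ^ 2) := by
  obtain ⟨hks1, hksK⟩ : 1 ≤ kstar ∧ kstar + 1 ≤ K := by rw [Finset.mem_Icc] at hkstar; omega
  obtain ⟨hkt1, hkt⟩ := Finset.mem_Icc.1 hktilde
  have hks : kstar ∈ Finset.Icc 1 K := by simp; omega
  have hQ' : ∀ k ∈ Finset.Icc 1 K, ∀ x ∈ Set.Ioc (0 : ℝ) 1, Q k x = Qform K c π k x := hQ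
  have hR' : ∀ k ∈ Finset.Icc 1 K, ∀ x ∈ Set.Ioc (0 : ℝ) 1, R k x = Rform K c π k x := hR
  have hmono := monotoneOn_Icc_of_lt_succ hcmono
  have hxstar := mem_Ioc_of_div_succ_le hc hks1 hksK hxstar_lb hxstar_ub
  have hxtilde := mem_Ioc_of_div_succ_le hc hkt1 (by omega) hxtilde_lb hxtilde_ub
  have hQstar : Qform K c π kstar xstar < Bbar := by
    rw [← hxstar_eq, hB kstar hks xstar hxstar, hQ' kstar hks xstar hxstar,
      lt_div_iff₀ (hR' kstar hks xstar hxstar ▸ Rform_pos hc hπpos hksK hxstar.1.le)]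
    exact mul_lt_of_lt_one_right (Qform_pos hc hπpos hks xstar) hRlt
  have hP : ∀ j ≤ K, (1 ≤ j ∧ Bbar > Q j 1) ↔ (1 ≤ j ∧ Qform K c π j 1 < Bbar) :=
    fun j hj => and_congr_right fun h1 => by rw [hQ' j (Finset.mem_Icc.2 ⟨h1, hj⟩) 1 (by simp)]
  obtain ⟨hks_le, htK, hPt, hDlo, hDhi⟩ := htstar ▸ findGreatest_Qform_lt_spec hc hπpos hP hks1
    (by omega) ((Qform_antitoneOn hc hπpos hks hxstar.1 (Set.mem_Ioi.2 one_pos) hxstar.2).trans_lt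
      hQstar) hBbar_ub
  set D := thresholdLevel K c π tstar Bbar
  have hA_high' : ∀ t, tstar < t → A t = 1 / √(c t) * D := hA_high
  have hD : 0 < D := (Real.sqrt_nonneg _).trans_lt hDlo
  have hcD : c tstar < D ^ 2 := (Real.sqrt_lt' hD).1 hDlo
  have hmaster : c ktilde ≤ xtilde * D ^ 2 := by
    rcases (hkt.trans hks_le).lt_or_eq with hlt | heq
    · exact le_mul_sq_of_div_succ_le hc hmono hkt1 hlt htK.le hxtilde_lb hcD
    · obtain rfl : kstar = tstar := by omega
      subst heq
      refine (lt_mul_sq_thresholdLevel_of_Rform_lt hc hπpos hks1 htK hxstar.1 ?_ hQstar).le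
      rw [← hR' _ hks _ hxtilde, ← hR' _ hks _ hxstar]
      linarith
  have hmean : ∑ t ∈ Finset.Icc 1 K, π t * q t = 1 / 2 := by
    have h := two_mul_sum_mul_adversary (K := K) (π := π) hq_low hq_high (by omega)
    rw [← hR' ktilde (by simp; omega) xtilde hxtilde, hxtilde_eq] at h
    linarith
  have hA := threshold_alloc_mem_Ioc hA_low hA_high' hc hmono hD hDhi
  have hspend : ∑ t ∈ Finset.Icc 1 K, π t * c t * A t = Bbar := by
    rw [sum_mul_threshold_alloc hA_low hA_high' htK.le, sum_add_thresholdLevel_mul hc hπpos htK]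
  refine ⟨⟨by simp; omega, hPt.2, fun k hk hQk => htstar ▸
    Nat.le_findGreatest (Finset.mem_Icc.1 hk).2 ⟨(Finset.mem_Icc.1 hk).1, hQk⟩,
    hkt.trans hks_le, htK⟩, hA,
    threshold_alloc_antitone hA_low hA_high' hc hmono hD hDhi, hspend,
    adversary_mem_Icc hq_low hq_high hc hmono (by omega) ⟨hxtilde.1.le, hxtilde.2⟩,
    fun A' hA' hA'spend => ?_, fun q' hq' => ?_⟩
  · have := sum_div_threshold_alloc_le hA_low hA_high' (fun t ht => (hπpos t ht).le) hc hD
      (le_sq_mul_adversary hq_low hq_high hc hmono (by omega) htK.le hcD hmaster)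
      (fun t ht => hq_high t (by omega)) hA' (hspend ▸ hA'spend)
    linarith
  · exact sum_mul_div_sub_sq_le (fun t ht => (hπpos t ht).le) hA (fun t ht => (hq' t ht).2)
      (fun t _ => (le_or_gt t ktilde).elim (fun h => .inr (hA_low t (by omega)))
        (fun h => .inl (hq_high t h))) hmean

/-- Case 2, `R(k*,x*) < 1`: with `t* = max{k ∈ {1,…,K} : B̄ > Q(k,1)}`,
the allocation rule equal to `1` up to `t*` and to
`(1/√c_t)·(B̄ − Σ_{s ≤ t*} π_s c_s)/(Σ_{s > t*} π_s √c_s)` above `t*`, together with the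
adversary response built from `(k̃, x̃)` with `R(k̃,x̃) = 1`, is a monotone non-increasing
budget-feasible allocation rule spending exactly `B̄`, `t*` is well defined with
`k̃ ≤ t* < K`, and `(A, q)` is an equilibrium pair. Costs are indexed by `{1, …, K}`. -/
theorem equilibrium_case_R_lt_one
    (K : ℕ) (hK : 2 ≤ K) (c π : ℕ → ℝ) (Q R B : ℕ → ℝ → ℝ) (Bbar : ℝ)
    (hc : ∀ t ∈ Finset.Icc 1 K, 0 < c t)
    (hcmono : ∀ j ∈ Finset.Icc 1 (K - 1), c j < c (j + 1))
    (hπpos : ∀ t ∈ Finset.Icc 1 K, 0 < π t)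
    (hπsum : ∑ t ∈ Finset.Icc 1 K, π t = 1)
    (hBbar_pos : 0 < Bbar)
    (hQ : ∀ k ∈ Finset.Icc 1 K, ∀ x ∈ Set.Ioc (0 : ℝ) 1,
      Q k x = (∑ t ∈ Finset.Icc 1 k, π t * c t)
        + ∑ t ∈ Finset.Icc (k + 1) K, π t * Real.sqrt (c t * c k / x))
    (hR : ∀ k ∈ Finset.Icc 1 K, ∀ x ∈ Set.Ioc (0 : ℝ) 1,
      R k x = 2 * ((∑ t ∈ Finset.Icc 1 k, π t * c t * x / c k)
        + ∑ t ∈ Finset.Icc (k + 1) K, π t))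
    (hB : ∀ k ∈ Finset.Icc 1 K, ∀ x ∈ Set.Ioc (0 : ℝ) 1,
      B k x = Q k x / R k x)
    (hBbar_lb : B 1 1 ≤ Bbar) (hBbar_ub : Bbar < ∑ t ∈ Finset.Icc 1 K, π t * c t)
    (kstar : ℕ) (hkstar : kstar ∈ Finset.Icc 1 (K - 1))
    (hkstar_lb : B kstar 1 ≤ Bbar) (hkstar_ub : Bbar < B (kstar + 1) 1)
    (xstar : ℝ) (hxstar_lb : c kstar / c (kstar + 1) ≤ xstar) (hxstar_ub : xstar ≤ 1)
    (hxstar_eq : B kstar xstar = Bbar)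
    (hRlt : R kstar xstar < 1)
    (tstar : ℕ)
    (htstar : tstar = Nat.findGreatest (fun k => 1 ≤ k ∧ Bbar > Q k 1) K)
    (ktilde : ℕ) (hktilde : ktilde ∈ Finset.Icc 1 kstar)
    (xtilde : ℝ) (hxtilde_lb : c ktilde / c (ktilde + 1) ≤ xtilde)
    (hxtilde_ub : xtilde ≤ 1) (hxtilde_eq : R ktilde xtilde = 1)
    (q A : ℕ → ℝ)
    (hq_low : ∀ t, t ≤ ktilde → q t = (c t / c ktilde) * xtilde)
    (hq_high : ∀ t, ktilde < t → q t = 1)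
    (hA_low : ∀ t, t ≤ tstar → A t = 1)
    (hA_high : ∀ t, tstar < t →
      A t = (1 / Real.sqrt (c t)) * ((Bbar - ∑ s ∈ Finset.Icc 1 tstar, π s * c s)
        / ∑ s ∈ Finset.Icc (tstar + 1) K, π s * Real.sqrt (c s))) :
    (tstar ∈ Finset.Icc 1 K ∧ Bbar > Q tstar 1 ∧
      (∀ k ∈ Finset.Icc 1 K, Bbar > Q k 1 → k ≤ tstar) ∧
      ktilde ≤ tstar ∧ tstar < K) ∧
    (∀ t ∈ Finset.Icc 1 K, 0 < A t ∧ A t ≤ 1) ∧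
    (∀ s ∈ Finset.Icc 1 K, ∀ t ∈ Finset.Icc 1 K, s ≤ t → A t ≤ A s) ∧
    (∑ t ∈ Finset.Icc 1 K, π t * c t * A t = Bbar) ∧
    (∀ t ∈ Finset.Icc 1 K, q t ∈ Set.Icc (0 : ℝ) 1) ∧
    (∀ A' : ℕ → ℝ, (∀ t ∈ Finset.Icc 1 K, 0 < A' t ∧ A' t ≤ 1) →
      (∑ t ∈ Finset.Icc 1 K, π t * c t * A' t ≤ Bbar) →
      (∑ t ∈ Finset.Icc 1 K, π t * q t / A t) - (∑ t ∈ Finset.Icc 1 K, π t * q t) ^ 2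
        ≤ (∑ t ∈ Finset.Icc 1 K, π t * q t / A' t)
          - (∑ t ∈ Finset.Icc 1 K, π t * q t) ^ 2) ∧
    (∀ q' : ℕ → ℝ, (∀ t ∈ Finset.Icc 1 K, q' t ∈ Set.Icc (0 : ℝ) 1) →
      (∑ t ∈ Finset.Icc 1 K, π t * q' t / A t) - (∑ t ∈ Finset.Icc 1 K, π t * q' t) ^ 2
        ≤ (∑ t ∈ Finset.Icc 1 K, π t * q t / A t)
          - (∑ t ∈ Finset.Icc 1 K, π t * q t) ^ 2) :=
  equilibrium_case_R_lt_one_general K c π Q R B Bbar hc hcmono hπpos hQ hR hB hBbar_ub kstar hkstar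
    xstar hxstar_lb hxstar_ub hxstar_eq hRlt tstar htstar ktilde hktilde xtilde hxtilde_lb
    hxtilde_ub hxtilde_eq q A hq_low hq_high hA_low hA_high
end

section
/- Suppose 0 < B̄ < Σ_{t=1}^K π_t·c_t. Then there exist an index t* ∈ {0,…,K}, constants Ā ∈ (0,1] and α ≥ 0, and a monotone non-increasing budget-feasible allocation rule A* given by A*_t = Ā for t ≤ t* and A*_t = α/√c_t for t > t*, with Σ_{t=1}^K π_t·c_t·A*_t = B̄, such that A* minimizes worst-case variance: sup_{q ∈ [0,1]^K} V(A*, q) ≤ sup_{q ∈ [0,1]^K} V(A', q) for every budget-feasible allocation rule A' ∈ (0,1]^K. -/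
/-!
For `β > 0` pool the costs with `β c_t ≤ 1` at the level `Ā = min 1 (1 / (2 M))`, where
`M = ∑ π_t min 1 (β c_t)`, and give the others `Ā / √(β c_t)`. The budget this spends is
continuous in `β`, equals `E[c]` for small `β` and decays like `1 / √β`, so some `β` spends
exactly `B̄`. Optimality is a saddle-point argument: the response `q*` that raises
`min 1 (β c_t)` uniformly until its mean is `1 / (2 Ā)` maximizes the concave map `V(A*, ·)`,
while `A*` minimizes the Lagrangian `V(·, q*) + (β / Ā²) · budget` coordinatewise over `(0, 1]`.
Hence `sup V(A*, ·) = V(A*, q*) ≤ V(A', q*) ≤ sup V(A', ·)` for every feasible `A'`.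
-/

open Finset Filter Topology

noncomputable section

variable {ι : Type*}

/-- The paper's `V(A, q)`. -/
def htVariance (s : Finset ι) (π A q : ι → ℝ) : ℝ :=
  ∑ t ∈ s, π t * q t / A t - (∑ t ∈ s, π t * q t) ^ 2

def worstCaseVariance (s : Finset ι) (π A : ι → ℝ) : ℝ :=
  sSup {w : ℝ | ∃ q : ι → ℝ, (∀ t ∈ s, q t ∈ Set.Icc (0 : ℝ) 1) ∧ w = htVariance s π A q}

section Variance

variable {s : Finset ι} {π A A' qs : ι → ℝ}

lemma bddAbove_htVariance (hπ : ∀ t ∈ s, 0 ≤ π t) (hA : ∀ t ∈ s, 0 < A t) :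
    BddAbove {w : ℝ | ∃ q : ι → ℝ, (∀ t ∈ s, q t ∈ Set.Icc (0 : ℝ) 1) ∧
      w = htVariance s π A q} := by
  refine ⟨∑ t ∈ s, π t / A t, ?_⟩
  rintro _ ⟨q, hq, rfl⟩
  have hlin : ∑ t ∈ s, π t * q t / A t ≤ ∑ t ∈ s, π t / A t := by
    gcongr with t ht
    · exact (hA t ht).le
    · exact mul_le_of_le_one_right (hπ t ht) (hq t ht).2
  unfold htVariance
  nlinarith [sq_nonneg (∑ t ∈ s, π t * q t)]

lemma worstCaseVariance_le_of_saddle (hπ : ∀ t ∈ s, 0 ≤ π t) (hA' : ∀ t ∈ s, 0 < A' t)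
    (hqs : ∀ t ∈ s, qs t ∈ Set.Icc (0 : ℝ) 1)
    (hmax : ∀ q : ι → ℝ, (∀ t ∈ s, q t ∈ Set.Icc (0 : ℝ) 1) →
      htVariance s π A q ≤ htVariance s π A qs)
    (hle : htVariance s π A qs ≤ htVariance s π A' qs) :
    worstCaseVariance s π A ≤ worstCaseVariance s π A' := by
  unfold worstCaseVariance
  refine le_trans ?_ (le_csSup (bddAbove_htVariance hπ hA') ⟨qs, hqs, rfl⟩)
  refine csSup_le ⟨_, qs, hqs, rfl⟩ ?_
  rintro _ ⟨q, hq, rfl⟩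
  exact (hmax q hq).trans hle

/-- `V(A, ·)` is concave, and its derivative `π t * (1 / A t - 2 * m)` at `qs` vanishes
wherever `qs t < 1`, so `qs` is a maximizer over the cube. -/
lemma htVariance_le_of_eq_or_eq_one {q : ι → ℝ} {m : ℝ} (hπ : ∀ t ∈ s, 0 ≤ π t)
    (hA : ∀ t ∈ s, 0 < A t ∧ A t ≤ (2 * m)⁻¹)
    (hslack : ∀ t ∈ s, A t = (2 * m)⁻¹ ∨ qs t = 1)
    (hmean : ∑ t ∈ s, π t * qs t = m) (hq : ∀ t ∈ s, q t ≤ 1) :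
    htVariance s π A q ≤ htVariance s π A qs := by
  have hterm : ∀ t ∈ s,
      π t * q t / A t - π t * qs t / A t ≤ 2 * m * (π t * q t - π t * qs t) := by
    intro t ht
    obtain ⟨hA0, hAle⟩ := hA t ht
    rw [← sub_div, ← mul_sub, div_eq_mul_inv, mul_comm (2 * m)]
    rcases hslack t ht with h | h
    · rw [h, inv_inv]
    · have hinv : 2 * m ≤ (A t)⁻¹ := by
        have h2m : 0 < 2 * m := inv_pos.mp (hA0.trans_le hAle)
        exact (le_inv_comm₀ h2m hA0).mpr hAle
      exact mul_le_mul_of_nonpos_left hinv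
        (mul_nonpos_of_nonneg_of_nonpos (hπ t ht) (by linarith [hq t ht, h]))
  have hsum := sum_le_sum hterm
  rw [sum_sub_distrib, ← mul_sum, sum_sub_distrib, hmean] at hsum
  unfold htVariance
  rw [hmean]
  nlinarith [sq_nonneg (∑ t ∈ s, π t * q t - m)]

lemma div_add_mul_le_div_add_mul {q μ a a₀ : ℝ} (ha : 0 < a) (ha₀ : 0 < a₀) (hμ : 0 ≤ μ)
    (hle : a ≤ 1) (hlow : μ * a₀ ^ 2 ≤ q) (hslack : q ≤ μ * a₀ ^ 2 ∨ a₀ = 1) :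
    q / a₀ + μ * a₀ ≤ q / a + μ * a := by
  have hdiff :
      q / a + μ * a - (q / a₀ + μ * a₀) = (a₀ - a) * (q - μ * (a * a₀)) / (a * a₀) := by
    field_simp
    ring
  have hnum : 0 ≤ (a₀ - a) * (q - μ * (a * a₀)) := by
    rcases le_or_gt a a₀ with h | h
    · have : μ * (a * a₀) ≤ μ * a₀ ^ 2 := by rw [sq]; gcongr
      nlinarith
    · have hq : q ≤ μ * a₀ ^ 2 := hslack.resolve_right (by linarith)
      have : μ * a₀ ^ 2 ≤ μ * (a * a₀) := by rw [sq]; gcongr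
      nlinarith
  rw [← sub_nonneg, hdiff]
  positivity

/-- Weak duality: `A` minimizes the Lagrangian `∑ π t * (qs t / A t + ν * c t * A t)`
coordinatewise. -/
lemma htVariance_le_of_kkt {c : ι → ℝ} {ν B : ℝ} (hπ : ∀ t ∈ s, 0 ≤ π t)
    (hc : ∀ t ∈ s, 0 ≤ c t) (hν : 0 ≤ ν) (hA : ∀ t ∈ s, 0 < A t)
    (hA' : ∀ t ∈ s, 0 < A' t ∧ A' t ≤ 1)
    (hlow : ∀ t ∈ s, ν * c t * A t ^ 2 ≤ qs t)
    (hslack : ∀ t ∈ s, qs t ≤ ν * c t * A t ^ 2 ∨ A t = 1)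
    (hbudget : ∑ t ∈ s, π t * c t * A t = B) (hbudget' : ∑ t ∈ s, π t * c t * A' t ≤ B) :
    htVariance s π A qs ≤ htVariance s π A' qs := by
  have hlagrange : ∀ A : ι → ℝ, ∑ t ∈ s, π t * (qs t / A t + ν * c t * A t)
      = ∑ t ∈ s, π t * qs t / A t + ν * ∑ t ∈ s, π t * c t * A t := by
    intro A
    rw [mul_sum, ← sum_add_distrib]
    exact sum_congr rfl fun t _ => by ring
  have hsum : ∑ t ∈ s, π t * (qs t / A t + ν * c t * A t)
      ≤ ∑ t ∈ s, π t * (qs t / A' t + ν * c t * A' t) :=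
    sum_le_sum fun t ht => mul_le_mul_of_nonneg_left
      (div_add_mul_le_div_add_mul (hA' t ht).1 (hA t ht) (mul_nonneg hν (hc t ht))
        (hA' t ht).2 (hlow t ht) (hslack t ht)) (hπ t ht)
  rw [hlagrange, hlagrange, hbudget] at hsum
  unfold htVariance
  nlinarith [mul_le_mul_of_nonneg_left hbudget' hν]

end Variance

section Allocation

variable (s : Finset ι) (π c : ι → ℝ)

def pooledMass (β : ℝ) : ℝ := ∑ t ∈ s, π t * min 1 (β * c t)

def worstCaseMean (β : ℝ) : ℝ := max (1 / 2) (pooledMass s π c β)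

def poolLevel (β : ℝ) : ℝ := (2 * worstCaseMean s π c β)⁻¹

def allocation (β : ℝ) (t : ι) : ℝ := poolLevel s π c β / √(max 1 (β * c t))

def allocationBudget (β : ℝ) : ℝ := ∑ t ∈ s, π t * c t * allocation s π c β t

def fillLevel (β : ℝ) : ℝ :=
  (worstCaseMean s π c β - pooledMass s π c β) / (1 - pooledMass s π c β)

/-- Raises `min 1 (β * c t)` uniformly towards `1` until the mean reaches `worstCaseMean`;
when `pooledMass = 1` nothing is raised, matching the junk value `0 / 0 = 0` of `fillLevel`. -/
def worstCaseResponse (β : ℝ) (t : ι) : ℝ :=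
  min 1 (β * c t) + fillLevel s π c β * (1 - min 1 (β * c t))

variable {s π c}

lemma half_le_worstCaseMean (β : ℝ) : 1 / 2 ≤ worstCaseMean s π c β := le_max_left _ _

lemma poolLevel_pos (β : ℝ) : 0 < poolLevel s π c β := by
  have := half_le_worstCaseMean (s := s) (π := π) (c := c) β
  unfold poolLevel
  positivity

lemma poolLevel_le_one (β : ℝ) : poolLevel s π c β ≤ 1 :=
  inv_le_one_of_one_le₀ (by linarith [half_le_worstCaseMean (s := s) (π := π) (c := c) β])

lemma allocation_pos (β : ℝ) (t : ι) : 0 < allocation s π c β t :=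
  div_pos (poolLevel_pos β) (Real.sqrt_pos.mpr (lt_max_of_lt_left one_pos))

lemma allocation_le_poolLevel (β : ℝ) (t : ι) : allocation s π c β t ≤ poolLevel s π c β :=
  div_le_self (poolLevel_pos β).le (Real.one_le_sqrt.mpr (le_max_left _ _))

lemma allocation_eq_poolLevel {β : ℝ} {t : ι} (h : β * c t ≤ 1) :
    allocation s π c β t = poolLevel s π c β := by
  rw [allocation, max_eq_left h, Real.sqrt_one, div_one]

lemma allocation_eq_div_sqrt {β : ℝ} {t : ι} (hβ : 0 ≤ β) (h : 1 ≤ β * c t) :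
    allocation s π c β t = poolLevel s π c β / √β / √(c t) := by
  rw [allocation, max_eq_right h, Real.sqrt_mul hβ, div_div]

lemma allocation_le_allocation_of_le {β : ℝ} {t u : ι} (hβ : 0 ≤ β) (h : c t ≤ c u) :
    allocation s π c β u ≤ allocation s π c β t := by
  unfold allocation
  gcongr
  exact (poolLevel_pos β).le

end Allocation

section WorstCase

variable {s : Finset ι} {π c : ι → ℝ}

lemma pooledMass_le_one (hπ : ∀ t ∈ s, 0 ≤ π t) (hπsum : ∑ t ∈ s, π t = 1) (β : ℝ) :
    pooledMass s π c β ≤ 1 :=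
  hπsum ▸ sum_le_sum fun t ht => mul_le_of_le_one_right (hπ t ht) (min_le_left _ _)

lemma worstCaseMean_le_one (hπ : ∀ t ∈ s, 0 ≤ π t) (hπsum : ∑ t ∈ s, π t = 1) (β : ℝ) :
    worstCaseMean s π c β ≤ 1 :=
  max_le (by norm_num) (pooledMass_le_one hπ hπsum β)

lemma fillLevel_mem_Icc (hπ : ∀ t ∈ s, 0 ≤ π t) (hπsum : ∑ t ∈ s, π t = 1) (β : ℝ) :
    fillLevel s π c β ∈ Set.Icc 0 1 := by
  have hM := pooledMass_le_one (c := c) hπ hπsum β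
  have hm := worstCaseMean_le_one (c := c) hπ hπsum β
  have hMm : pooledMass s π c β ≤ worstCaseMean s π c β := le_max_right _ _
  exact ⟨div_nonneg (by linarith) (by linarith), div_le_one_of_le₀ (by linarith) (by linarith)⟩

lemma worstCaseResponse_mem_Icc (hπ : ∀ t ∈ s, 0 ≤ π t) (hπsum : ∑ t ∈ s, π t = 1)
    {β : ℝ} (hβ : 0 ≤ β) (hc : ∀ t ∈ s, 0 ≤ c t) :
    ∀ t ∈ s, worstCaseResponse s π c β t ∈ Set.Icc 0 1 := by
  intro t ht
  obtain ⟨hθ0, hθ1⟩ := fillLevel_mem_Icc (c := c) hπ hπsum β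
  have hμ0 : 0 ≤ min 1 (β * c t) := le_min zero_le_one (mul_nonneg hβ (hc t ht))
  have hμ1 : min 1 (β * c t) ≤ 1 := min_le_left _ _
  unfold worstCaseResponse
  constructor <;> nlinarith

lemma sum_worstCaseResponse (hπsum : ∑ t ∈ s, π t = 1) (β : ℝ) :
    ∑ t ∈ s, π t * worstCaseResponse s π c β t = worstCaseMean s π c β := by
  set M := pooledMass s π c β
  have hfill : fillLevel s π c β * (1 - M) = worstCaseMean s π c β - M := by
    refine div_mul_cancel_of_imp fun h => ?_
    rw [worstCaseMean, show pooledMass s π c β = 1 by linarith]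
    norm_num
  calc ∑ t ∈ s, π t * worstCaseResponse s π c β t
      = M + fillLevel s π c β * (∑ t ∈ s, π t - M) := by
        simp only [worstCaseResponse, M, pooledMass, mul_sum, ← sum_sub_distrib, ← sum_add_distrib]
        exact sum_congr rfl fun t _ => by ring
    _ = worstCaseMean s π c β := by rw [hπsum, hfill]; ring

lemma allocation_eq_poolLevel_or_worstCaseResponse_eq_one (β : ℝ) :
    ∀ t ∈ s, allocation s π c β t = poolLevel s π c β ∨ worstCaseResponse s π c β t = 1 := by
  intro t _
  rcases le_or_gt (β * c t) 1 with h | h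
  · exact Or.inl (allocation_eq_poolLevel h)
  · right
    rw [worstCaseResponse, min_eq_left h.le]
    ring

/-- Identifies `β / Ā²` as the Lagrange multiplier of the budget constraint: together with
`min_le_worstCaseResponse` this is the first-order condition of `htVariance_le_of_kkt`. -/
lemma multiplier_mul_sq_allocation {β : ℝ} (hβ : 0 ≤ β) (hc : ∀ t ∈ s, 0 ≤ c t) :
    ∀ t ∈ s, β / poolLevel s π c β ^ 2 * c t * allocation s π c β t ^ 2 = min 1 (β * c t) := by
  intro t ht
  have hβc : 0 ≤ β * c t := mul_nonneg hβ (hc t ht)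
  have hA := (poolLevel_pos (s := s) (π := π) (c := c) β).ne'
  rw [allocation, div_pow, Real.sq_sqrt (hβc.trans (le_max_right _ _))]
  field_simp
  rcases le_total (β * c t) 1 with h | h
  · rw [max_eq_left h, min_eq_right h, one_mul]
  · rw [max_eq_right h, min_eq_left h, mul_one]

lemma min_le_worstCaseResponse (hπ : ∀ t ∈ s, 0 ≤ π t) (hπsum : ∑ t ∈ s, π t = 1) (β : ℝ) :
    ∀ t ∈ s, min 1 (β * c t) ≤ worstCaseResponse s π c β t := fun _ _ =>
  le_add_of_nonneg_right <|
    mul_nonneg (fillLevel_mem_Icc hπ hπsum β).1 (sub_nonneg.mpr (min_le_left _ _))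

lemma worstCaseResponse_le_min_or_allocation_eq_one (β : ℝ) :
    ∀ t ∈ s, worstCaseResponse s π c β t ≤ min 1 (β * c t) ∨ allocation s π c β t = 1 := by
  intro t _
  by_cases hM : 1 / 2 ≤ pooledMass s π c β
  · left
    rw [worstCaseResponse, fillLevel, worstCaseMean, max_eq_right hM]
    simp
  · rcases le_or_gt (β * c t) 1 with h | h
    · right
      rw [allocation_eq_poolLevel h, poolLevel, worstCaseMean, max_eq_left (not_le.mp hM).le]
      norm_num
    · left
      rw [worstCaseResponse, min_eq_left h.le]
      simp

end WorstCase

section Optimality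

variable {s : Finset ι} {π c : ι → ℝ}

theorem worstCaseVariance_allocation_le (hπ : ∀ t ∈ s, 0 ≤ π t) (hπsum : ∑ t ∈ s, π t = 1)
    (hc : ∀ t ∈ s, 0 ≤ c t) {β : ℝ} (hβ : 0 ≤ β) {A' : ι → ℝ}
    (hA' : ∀ t ∈ s, 0 < A' t ∧ A' t ≤ 1)
    (hbudget' : ∑ t ∈ s, π t * c t * A' t ≤ allocationBudget s π c β) :
    worstCaseVariance s π (allocation s π c β) ≤ worstCaseVariance s π A' := by
  have hν : 0 ≤ β / poolLevel s π c β ^ 2 := by positivity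
  refine worstCaseVariance_le_of_saddle hπ (fun t ht => (hA' t ht).1)
    (worstCaseResponse_mem_Icc hπ hπsum hβ hc) (fun q hq => ?_) ?_
  · exact htVariance_le_of_eq_or_eq_one hπ
      (fun t _ => ⟨allocation_pos β t, allocation_le_poolLevel β t⟩)
      (allocation_eq_poolLevel_or_worstCaseResponse_eq_one β) (sum_worstCaseResponse hπsum β)
      (fun t ht => (hq t ht).2)
  · refine htVariance_le_of_kkt hπ hc hν (fun t _ => allocation_pos β t) hA'
      (fun t ht => ?_) (fun t ht => ?_) rfl hbudget'
    · rw [multiplier_mul_sq_allocation hβ hc t ht]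
      exact min_le_worstCaseResponse hπ hπsum β t ht
    · rw [multiplier_mul_sq_allocation hβ hc t ht]
      exact worstCaseResponse_le_min_or_allocation_eq_one β t ht

end Optimality

section Budget

variable {s : Finset ι} {π c : ι → ℝ}

lemma continuous_allocationBudget : Continuous (allocationBudget s π c) := by
  have hmean : Continuous (worstCaseMean s π c) := by
    unfold worstCaseMean pooledMass
    fun_prop
  have hlevel : Continuous (poolLevel s π c) :=
    Continuous.inv₀ (f := fun β => 2 * worstCaseMean s π c β) (by fun_prop) fun β => by
      linarith [half_le_worstCaseMean (s := s) (π := π) (c := c) β]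
  unfold allocationBudget allocation
  refine continuous_finsetSum _ fun t _ => continuous_const.mul (hlevel.div ?_ fun β => ?_)
  · fun_prop
  · exact (Real.sqrt_pos.mpr (lt_max_of_lt_left one_pos)).ne'

lemma allocationBudget_eq_of_forall_le (hπ : ∀ t ∈ s, 0 ≤ π t) (hπsum : ∑ t ∈ s, π t = 1)
    {β : ℝ} (hβc : ∀ t ∈ s, β * c t ≤ 1 / 2) :
    allocationBudget s π c β = ∑ t ∈ s, π t * c t := by
  have hM : pooledMass s π c β ≤ 1 / 2 := calc
    pooledMass s π c β ≤ ∑ t ∈ s, π t * (1 / 2) :=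
      sum_le_sum fun t ht =>
        mul_le_mul_of_nonneg_left ((min_le_right _ _).trans (hβc t ht)) (hπ t ht)
    _ = 1 / 2 := by rw [← sum_mul, hπsum, one_mul]
  have hlevel : poolLevel s π c β = 1 := by
    rw [poolLevel, worstCaseMean, max_eq_left hM]
    norm_num
  refine sum_congr rfl fun t ht => ?_
  rw [allocation_eq_poolLevel ((hβc t ht).trans (by norm_num)), hlevel, mul_one]

lemma allocationBudget_le (hπ : ∀ t ∈ s, 0 ≤ π t) (hc : ∀ t ∈ s, 0 < c t) {β : ℝ}
    (hβ : 0 < β) :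
    allocationBudget s π c β ≤ (∑ t ∈ s, π t * √(c t)) / √β := by
  rw [sum_div]
  refine sum_le_sum fun t ht => ?_
  have hct := hc t ht
  have hsqrt : 0 < √(β * c t) := Real.sqrt_pos.mpr (mul_pos hβ hct)
  calc π t * c t * allocation s π c β t ≤ π t * c t * (1 / √(β * c t)) := by
        gcongr
        · exact mul_nonneg (hπ t ht) hct.le
        · exact (div_le_div_of_nonneg_right (poolLevel_le_one β) (Real.sqrt_nonneg _)).trans
            (one_div_le_one_div_of_le hsqrt (Real.sqrt_le_sqrt (le_max_right _ _)))
    _ = π t * √(c t) / √β := by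
        rw [Real.sqrt_mul hβ.le]
        have : √(c t) ^ 2 = c t := Real.sq_sqrt hct.le
        field_simp
        linear_combination (-π t) * this

end Budget

theorem exists_allocationBudget_eq {s : Finset ι} {π c : ι → ℝ} (hπ : ∀ t ∈ s, 0 ≤ π t)
    (hπsum : ∑ t ∈ s, π t = 1) (hc : ∀ t ∈ s, 0 < c t) {B : ℝ} (hB : 0 < B)
    (hBle : B ≤ ∑ t ∈ s, π t * c t) :
    ∃ β, 0 < β ∧ allocationBudget s π c β = B := by
  obtain ⟨β₀, hβ₀, hβ₀c⟩ : ∃ β₀, 0 < β₀ ∧ ∀ t ∈ s, β₀ * c t ≤ 1 / 2 := by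
    have hsmall : ∀ t ∈ s, ∀ᶠ β in 𝓝[>] (0 : ℝ), β * c t ≤ 1 / 2 := fun t _ =>
      (((continuous_mul_const (c t)).tendsto' 0 0 (zero_mul _)).mono_left
        nhdsWithin_le_nhds).eventually (eventually_le_nhds (by norm_num))
    exact (eventually_mem_nhdsWithin.and ((eventually_all_finset s).2 hsmall)).exists
  obtain ⟨β₁, hβ₀₁, hβ₁⟩ : ∃ β₁, β₀ ≤ β₁ ∧ (∑ t ∈ s, π t * √(c t)) / √β₁ ≤ B := by
    have hdecay : Tendsto (fun β => (∑ t ∈ s, π t * √(c t)) / √β) atTop (𝓝 0) :=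
      tendsto_const_nhds.div_atTop Real.tendsto_sqrt_atTop
    exact ((eventually_ge_atTop β₀).and (hdecay.eventually (eventually_le_nhds hB))).exists
  have hB₀ : allocationBudget s π c β₀ = ∑ t ∈ s, π t * c t :=
    allocationBudget_eq_of_forall_le hπ hπsum hβ₀c
  obtain ⟨β, hβ, hβB⟩ := intermediate_value_Icc' hβ₀₁ continuous_allocationBudget.continuousOn
    ⟨(allocationBudget_le hπ hc (hβ₀.trans_le hβ₀₁)).trans hβ₁, hB₀ ▸ hBle⟩
  exact ⟨β, hβ₀.trans_le hβ.1, hβB⟩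

lemma strictMonoOn_Icc_of_lt_add_one {α : Type*} [Preorder α] {f : ℕ → α} {K : ℕ}
    (hf : ∀ j ∈ Finset.Icc 1 (K - 1), f j < f (j + 1)) :
    StrictMonoOn f (Finset.Icc 1 K) := by
  rw [Finset.coe_Icc]
  refine strictMonoOn_of_lt_succ Set.ordConnected_Icc fun j _ hj hj' => ?_
  rw [Order.succ_eq_add_one] at hj' ⊢
  exact hf j (Finset.mem_Icc.mpr ⟨hj.1, by have := hj'.2; omega⟩)

lemma MonotoneOn.exists_threshold {α : Type*} [Preorder α] {f : ℕ → α} {K : ℕ}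
    (hf : MonotoneOn f (Finset.Icc 1 K)) (r : α) :
    ∃ n ≤ K, ∀ t ∈ Finset.Icc 1 K, t ≤ n ↔ f t ≤ r := by
  classical
  set S := (Finset.Icc 1 K).filter (f · ≤ r)
  refine ⟨S.sup id, Finset.sup_le fun b hb => (mem_Icc.mp (mem_filter.mp hb).1).2,
    fun t ht => ⟨fun h => ?_, fun h => le_sup (f := id) (mem_filter.mpr ⟨ht, h⟩)⟩⟩
  have ht0 : ⊥ < t := by rw [Nat.bot_eq_zero]; exact (mem_Icc.mp ht).1
  obtain ⟨b, hb, htb⟩ := (Finset.le_sup_iff ht0).mp h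
  obtain ⟨hbI, hbr⟩ := mem_filter.mp hb
  exact (hf ht hbI htb).trans hbr

end

theorem optimal_allocation_moment_estimation_general
    (K : ℕ) (c π : ℕ → ℝ) (Bbar : ℝ)
    (hc : ∀ t ∈ Finset.Icc 1 K, 0 < c t)
    (hcmono : ∀ j ∈ Finset.Icc 1 (K - 1), c j < c (j + 1))
    (hπpos : ∀ t ∈ Finset.Icc 1 K, 0 < π t)
    (hπsum : ∑ t ∈ Finset.Icc 1 K, π t = 1)
    (hBbar_pos : 0 < Bbar)
    (hBbar_ub : Bbar < ∑ t ∈ Finset.Icc 1 K, π t * c t) :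
    ∃ tstar : ℕ, tstar ≤ K ∧
    ∃ Abar : ℝ, Abar ∈ Set.Ioc (0 : ℝ) 1 ∧
    ∃ α : ℝ, 0 ≤ α ∧
    ∃ Astar : ℕ → ℝ,
      (∀ t ∈ Finset.Icc 1 K, t ≤ tstar → Astar t = Abar) ∧
      (∀ t ∈ Finset.Icc 1 K, tstar < t → Astar t = α / Real.sqrt (c t)) ∧
      (∀ t ∈ Finset.Icc 1 K, 0 < Astar t ∧ Astar t ≤ 1) ∧
      (∀ s ∈ Finset.Icc 1 K, ∀ t ∈ Finset.Icc 1 K, s ≤ t → Astar t ≤ Astar s) ∧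
      (∑ t ∈ Finset.Icc 1 K, π t * c t * Astar t = Bbar) ∧
      (∀ A' : ℕ → ℝ, (∀ t ∈ Finset.Icc 1 K, 0 < A' t ∧ A' t ≤ 1) →
        (∑ t ∈ Finset.Icc 1 K, π t * c t * A' t ≤ Bbar) →
        sSup {w : ℝ | ∃ q : ℕ → ℝ, (∀ t ∈ Finset.Icc 1 K, q t ∈ Set.Icc (0 : ℝ) 1) ∧
            w = (∑ t ∈ Finset.Icc 1 K, π t * q t / Astar t)
              - (∑ t ∈ Finset.Icc 1 K, π t * q t) ^ 2}
          ≤ sSup {w : ℝ | ∃ q : ℕ → ℝ, (∀ t ∈ Finset.Icc 1 K, q t ∈ Set.Icc (0 : ℝ) 1) ∧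
            w = (∑ t ∈ Finset.Icc 1 K, π t * q t / A' t)
              - (∑ t ∈ Finset.Icc 1 K, π t * q t) ^ 2}) := by
  have hπ : ∀ t ∈ Finset.Icc 1 K, 0 ≤ π t := fun t ht => (hπpos t ht).le
  obtain ⟨β, hβ, hbudget⟩ := exists_allocationBudget_eq hπ hπsum hc hBbar_pos hBbar_ub.le
  have hcmono' := (strictMonoOn_Icc_of_lt_add_one hcmono).monotoneOn
  obtain ⟨tstar, htK, hthreshold⟩ := MonotoneOn.exists_threshold (f := fun t => β * c t)
    (fun a ha b hb hab => mul_le_mul_of_nonneg_left (hcmono' ha hb hab) hβ.le) 1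
  set Abar := poolLevel (Finset.Icc 1 K) π c β
  refine ⟨tstar, htK, Abar, ⟨poolLevel_pos β, poolLevel_le_one β⟩, Abar / √β,
    div_nonneg (poolLevel_pos β).le (Real.sqrt_nonneg β), allocation (Finset.Icc 1 K) π c β,
    ?pooled, ?unpooled, ?bounds, ?antitone, hbudget, ?optimal⟩
  case pooled => exact fun t ht h => allocation_eq_poolLevel ((hthreshold t ht).mp h)
  case unpooled =>
    intro t ht h
    exact allocation_eq_div_sqrt hβ.le (not_le.mp (mt (hthreshold t ht).mpr h.not_ge)).le
  case bounds =>
    exact fun t _ =>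
      ⟨allocation_pos β t, (allocation_le_poolLevel β t).trans (poolLevel_le_one β)⟩
  case antitone =>
    exact fun u hu t ht hut => allocation_le_allocation_of_le hβ.le (hcmono' hu ht hut)
  case optimal =>
    intro A' hA' hbudget'
    exact worstCaseVariance_allocation_le hπ hπsum (fun t ht => (hc t ht).le) hβ.le hA'
      (hbudget ▸ hbudget')

/-- Optimal allocation for moment estimation: for `0 < B̄ < E[c]` there
is an optimal allocation rule that pools the lowest costs at a constant level `Ā` up to
some threshold index `t*` and allocates proportionally to `1/√c_t` above it, spends
exactly the budget, and minimizes the worst-case variance `sup_{q ∈ [0,1]^K} V(·,q)`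
among all budget-feasible allocation rules. Costs are indexed by `{1, …, K}`. -/
theorem optimal_allocation_moment_estimation
    (K : ℕ) (hK : 1 ≤ K) (c π : ℕ → ℝ) (Bbar : ℝ)
    (hc : ∀ t ∈ Finset.Icc 1 K, 0 < c t)
    (hcmono : ∀ j ∈ Finset.Icc 1 (K - 1), c j < c (j + 1))
    (hπpos : ∀ t ∈ Finset.Icc 1 K, 0 < π t)
    (hπsum : ∑ t ∈ Finset.Icc 1 K, π t = 1)
    (hBbar_pos : 0 < Bbar)
    (hBbar_ub : Bbar < ∑ t ∈ Finset.Icc 1 K, π t * c t) :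
    ∃ tstar : ℕ, tstar ≤ K ∧
    ∃ Abar : ℝ, Abar ∈ Set.Ioc (0 : ℝ) 1 ∧
    ∃ α : ℝ, 0 ≤ α ∧
    ∃ Astar : ℕ → ℝ,
      (∀ t ∈ Finset.Icc 1 K, t ≤ tstar → Astar t = Abar) ∧
      (∀ t ∈ Finset.Icc 1 K, tstar < t → Astar t = α / Real.sqrt (c t)) ∧
      (∀ t ∈ Finset.Icc 1 K, 0 < Astar t ∧ Astar t ≤ 1) ∧
      (∀ s ∈ Finset.Icc 1 K, ∀ t ∈ Finset.Icc 1 K, s ≤ t → Astar t ≤ Astar s) ∧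
      (∑ t ∈ Finset.Icc 1 K, π t * c t * Astar t = Bbar) ∧
      (∀ A' : ℕ → ℝ, (∀ t ∈ Finset.Icc 1 K, 0 < A' t ∧ A' t ≤ 1) →
        (∑ t ∈ Finset.Icc 1 K, π t * c t * A' t ≤ Bbar) →
        sSup {w : ℝ | ∃ q : ℕ → ℝ, (∀ t ∈ Finset.Icc 1 K, q t ∈ Set.Icc (0 : ℝ) 1) ∧
            w = (∑ t ∈ Finset.Icc 1 K, π t * q t / Astar t)
              - (∑ t ∈ Finset.Icc 1 K, π t * q t) ^ 2}
          ≤ sSup {w : ℝ | ∃ q : ℕ → ℝ, (∀ t ∈ Finset.Icc 1 K, q t ∈ Set.Icc (0 : ℝ) 1) ∧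
            w = (∑ t ∈ Finset.Icc 1 K, π t * q t / A' t)
              - (∑ t ∈ Finset.Icc 1 K, π t * q t) ^ 2}) :=
  optimal_allocation_moment_estimation_general K c π Bbar hc hcmono hπpos hπsum hBbar_pos hBbar_ub
end
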